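/- arXiv:2408.10447 — 9 statements merged into one kernel-verified Lean document; each statement's English description precedes it below -/
import Mathlib

section
/- For all real numbers κ with 0 < κ ≤ e and all real numbers x ≥ e^(1/κ), setting m = ⌊κ·log(x)⌋, one has m!/(log(x))^(m+1) < C_κ / (x^(κ(1−log κ)) · √(log x)), where C_κ = √(2π/κ)·e^(13/12). -/
/-!
Write `L = log x`, `t = κ L` and `m = ⌊t⌋`. Since `stirlingSeq` decreases from
`stirlingSeq 1 = e / √2`, we have `m! ≤ e √m (m / e) ^ m ≤ e √t (t / e) ^ m`.
As `x ^ (κ (1 - log κ)) = (e / κ) ^ t`, this gives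
`m! x ^ (κ (1 - log κ)) √L / L ^ (m + 1) ≤ e √κ (e / κ) ^ (t - m) ≤ e ^ 2 / √κ`,
using `e / κ ≥ 1` and `t - m < 1`. Finally `e ^ 2 < √(2π) e ^ (13/12)` because
`e ^ (11/12) < √(2π)`.
-/

open Real Nat

lemma exp_eleven_div_twelve_lt_sqrt_two_pi : exp (11 / 12) < √(2 * π) := by
  rw [← pow_lt_pow_iff_left₀ (exp_pos _).le (sqrt_nonneg _) (by norm_num : (12 : ℕ) ≠ 0),
    ← exp_nat_mul, show (12 : ℕ) = 2 * 6 from rfl, pow_mul, sq_sqrt (by positivity)]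
  calc exp (((2 * 6 : ℕ) : ℝ) * (11 / 12)) = exp 1 ^ 11 := by rw [← exp_nat_mul]; norm_num
    _ < 2.7182818286 ^ 11 := by gcongr; exact exp_one_lt_d9
    _ < 6.283184 ^ 6 := by norm_num
    _ < (2 * π) ^ 6 := by gcongr; linarith [pi_gt_d6]

lemma factorial_le_exp_one_mul_sqrt_mul_div_exp_pow {n : ℕ} (hn : n ≠ 0) :
    (n ! : ℝ) ≤ exp 1 * √n * (n / exp 1) ^ n := by
  obtain ⟨k, rfl⟩ := Nat.exists_eq_add_one_of_ne_zero hn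
  have h : Stirling.stirlingSeq (k + 1) ≤ exp 1 / √2 :=
    Stirling.stirlingSeq_one ▸ Stirling.stirlingSeq'_antitone (Nat.zero_le k)
  rw [Stirling.stirlingSeq, div_le_div_iff₀ (by positivity) (by positivity),
    sqrt_mul zero_le_two] at h
  rw [← mul_le_mul_iff_left₀ (sqrt_pos.2 (zero_lt_two' ℝ))]
  linarith

lemma factorial_le_exp_one_mul_sqrt_mul_div_exp_pow_of_le {n : ℕ} (hn : n ≠ 0) {t : ℝ}
    (hnt : n ≤ t) : (n ! : ℝ) ≤ exp 1 * √t * (t / exp 1) ^ n :=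
  (factorial_le_exp_one_mul_sqrt_mul_div_exp_pow hn).trans (by gcongr)

lemma rpow_mul_one_sub_log_eq {x κ : ℝ} (hx : 0 < x) (hκ : 0 < κ) :
    x ^ (κ * (1 - log κ)) = (exp 1 / κ) ^ (κ * log x) := by
  rw [rpow_def_of_pos hx, rpow_def_of_pos (by positivity), log_div (exp_ne_zero 1) hκ.ne',
    log_exp]
  ring_nf

lemma factorial_mul_rpow_mul_sqrt_le {κ L : ℝ} (hκ : 0 < κ) (hL : 0 < L) {n : ℕ}
    (hn : n ≠ 0) (hnt : n ≤ κ * L) :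
    n ! * (exp 1 / κ) ^ (κ * L) * √L ≤
      exp 1 * √κ * (exp 1 / κ) ^ (κ * L - n) * L ^ (n + 1) := by
  have hsplit : (exp 1 / κ) ^ (κ * L) = (exp 1 / κ) ^ (κ * L - n) * (exp 1 / κ) ^ n := by
    rw [← rpow_natCast, ← rpow_add (by positivity), sub_add_cancel]
  have hsqrt : √(κ * L) * √L = √κ * L := by
    rw [sqrt_mul hκ.le, mul_assoc, mul_self_sqrt hL.le]
  calc (n ! : ℝ) * (exp 1 / κ) ^ (κ * L) * √L
      ≤ exp 1 * √(κ * L) * (κ * L / exp 1) ^ n * (exp 1 / κ) ^ (κ * L) * √L := by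
        gcongr; exact factorial_le_exp_one_mul_sqrt_mul_div_exp_pow_of_le hn hnt
    _ = exp 1 * (√(κ * L) * √L) * (exp 1 / κ) ^ (κ * L - n) *
          (κ * L / exp 1 * (exp 1 / κ)) ^ n := by
        rw [hsplit, mul_pow]; ring
    _ = exp 1 * √κ * (exp 1 / κ) ^ (κ * L - n) * L ^ (n + 1) := by
        rw [hsqrt, div_mul_div_cancel₀ (exp_ne_zero 1), mul_div_cancel_left₀ L hκ.ne',
          pow_succ]
        ring

lemma exp_one_mul_sqrt_mul_exp_one_div_lt {κ : ℝ} (hκ : 0 < κ) :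
    exp 1 * √κ * (exp 1 / κ) < √(2 * π / κ) * exp (13 / 12) := by
  have hsq : exp 1 * exp 1 < √(2 * π) * exp (13 / 12) := by
    rw [← exp_add, show (1 : ℝ) + 1 = 11 / 12 + 13 / 12 by norm_num, exp_add]
    gcongr
    exact exp_eleven_div_twelve_lt_sqrt_two_pi
  calc exp 1 * √κ * (exp 1 / κ) = exp 1 * exp 1 / √κ := by
        field_simp
        rw [sq_sqrt hκ.le]
    _ < √(2 * π) * exp (13 / 12) / √κ := by gcongr
    _ = √(2 * π / κ) * exp (13 / 12) := by rw [sqrt_div (by positivity)]; ring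

/-- For all real `0 < κ ≤ e` and all real `x ≥ e^(1/κ)`, with
`m = ⌊κ·log x⌋`, one has `m!/(log x)^(m+1) < C_κ / (x^(κ(1−log κ)) · √(log x))`,
where `C_κ = √(2π/κ)·e^(13/12)`. -/
theorem factorial_div_log_pow_lt (κ x : ℝ) (hκ0 : 0 < κ) (hκe : κ ≤ Real.exp 1)
    (hx : Real.exp (1 / κ) ≤ x) :
    (Nat.factorial ⌊κ * Real.log x⌋₊ : ℝ) / Real.log x ^ (⌊κ * Real.log x⌋₊ + 1)
      < Real.sqrt (2 * Real.pi / κ) * Real.exp (13 / 12)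
        / (x ^ (κ * (1 - Real.log κ)) * Real.sqrt (Real.log x)) := by
  have hx0 : 0 < x := (exp_pos _).trans_le hx
  set L := log x
  have hκL : 1 ≤ κ * L := by
    rw [← div_le_iff₀' hκ0]
    exact (le_log_iff_exp_le hx0).2 hx
  have hL : 0 < L := pos_of_mul_pos_right (one_pos.trans_le hκL) hκ0.le
  set m := ⌊κ * L⌋₊
  have hm : m ≠ 0 := (Nat.floor_pos.2 hκL).ne'
  rw [rpow_mul_one_sub_log_eq hx0 hκ0, div_lt_div_iff₀ (by positivity) (by positivity),
    ← mul_assoc]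
  calc (m ! : ℝ) * (exp 1 / κ) ^ (κ * L) * √L
      ≤ exp 1 * √κ * (exp 1 / κ) ^ (κ * L - m) * L ^ (m + 1) :=
        factorial_mul_rpow_mul_sqrt_le hκ0 hL hm (Nat.floor_le (by positivity))
    _ ≤ exp 1 * √κ * (exp 1 / κ) * L ^ (m + 1) := by
        gcongr
        exact rpow_le_self_of_one_le ((one_le_div hκ0).2 hκe)
          (by linarith [Nat.lt_floor_add_one (κ * L)])
    _ < √(2 * π / κ) * exp (13 / 12) * L ^ (m + 1) :=
        mul_lt_mul_of_pos_right (exp_one_mul_sqrt_mul_exp_one_div_lt hκ0) (by positivity)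
end

section
/- Let 0 < ω < 1 be real and let κ̲ ∈ (0,1) be the solution of κ(1 − log κ) = ω in (0,1). For every real x ≥ e, setting m̲ = ⌊κ̲·log x⌋ and α̲ = κ̲·log(x) − m̲, and for α equal to either 0 or α̲, one has li_{ω̲,α}(x) < li_*(x). -/
/-- The Stieltjes asymptotic approximation of `li(x)`:
`li_*(x) = (x/log x)·Σ_{k=0}^{n−1} k!/(log x)^k + (log x − n)·x·n!/(log x)^(n+1)`
with `n = ⌊log x⌋`. -/
noncomputable def liStar (x : ℝ) : ℝ :=
  x / Real.log x *
      ∑ k ∈ Finset.range ⌊Real.log x⌋₊, (Nat.factorial k : ℝ) / Real.log x ^ k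
    + (Real.log x - ⌊Real.log x⌋₊) * x * (Nat.factorial ⌊Real.log x⌋₊ : ℝ)
      / Real.log x ^ (⌊Real.log x⌋₊ + 1)

/-- The truncated asymptotic approximation of `li(x)` with truncation parameter `κ`
and fractional coefficient `α`:
`li_{κ,α}(x) = (x/log x)·(α·m!/(log x)^m + Σ_{k=0}^{m−1} k!/(log x)^k)` with
`m = ⌊κ·log x⌋`. -/
noncomputable def liApprox (κ α x : ℝ) : ℝ :=
  x / Real.log x *
    (α * (Nat.factorial ⌊κ * Real.log x⌋₊ : ℝ) / Real.log x ^ ⌊κ * Real.log x⌋₊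
      + ∑ k ∈ Finset.range ⌊κ * Real.log x⌋₊, (Nat.factorial k : ℝ) / Real.log x ^ k)

/-- For `0 < ω < 1`, `κ̲ ∈ (0,1)` the solution of `κ(1−log κ) = ω`,
every real `x ≥ e`, `m̲ = ⌊κ̲·log x⌋`, `α̲ = κ̲·log x − m̲`, and `α ∈ {0, α̲}`,
one has `li_{ω̲,α}(x) < li_*(x)`. -/
theorem liApprox_lower_lt_liStar (ω κ : ℝ) (hω0 : 0 < ω) (hω1 : ω < 1)
    (hκ0 : 0 < κ) (hκ1 : κ < 1) (hsol : κ * (1 - Real.log κ) = ω)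
    (x : ℝ) (hx : Real.exp 1 ≤ x) (α : ℝ)
    (hα : α = 0 ∨ α = κ * Real.log x - ⌊κ * Real.log x⌋₊) :
    liApprox κ α x < liStar x := by
  have hx0 : 0 < x := lt_of_lt_of_le (Real.exp_pos 1) hx
  have hL : 1 ≤ Real.log x := by
    rw [Real.le_log_iff_exp_le hx0]; simpa using hx
  unfold liApprox liStar
  set L := Real.log x with hLdef
  have hL0 : 0 < L := by linarith
  have hκL0 : 0 ≤ κ * L := by positivity
  have hκLL : κ * L < L := by nlinarith
  set m := ⌊κ * L⌋₊ with hm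
  set n := ⌊L⌋₊ with hn
  have hmn : m ≤ n := Nat.floor_mono hκLL.le
  have hnL : (n : ℝ) ≤ L := Nat.floor_le hL0.le
  have hα0 : 0 ≤ α := by
    rcases hα with h | h
    · simp [h]
    · rw [h]; have := Nat.floor_le hκL0; linarith
  have hα1 : α < 1 := by
    rcases hα with h | h
    · simp [h]
    · rw [h]; have := Nat.lt_floor_add_one (κ * L); push_cast at this ⊢; linarith
  have hxL : 0 < x / L := by positivity
  have hfac : ∀ k : ℕ, (0:ℝ) < (Nat.factorial k : ℝ) / L ^ k := by
    intro k
    have : (0:ℝ) < (Nat.factorial k : ℝ) := by exact_mod_cast (Nat.factorial_pos k)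
    positivity
  rcases lt_or_ge m n with hlt | hge
  · -- m < n : compare sums
    have h1 : α * (Nat.factorial m : ℝ) / L ^ m
        + ∑ k ∈ Finset.range m, (Nat.factorial k : ℝ) / L ^ k
        < ∑ k ∈ Finset.range n, (Nat.factorial k : ℝ) / L ^ k := by
      have hstep : α * (Nat.factorial m : ℝ) / L ^ m
          + ∑ k ∈ Finset.range m, (Nat.factorial k : ℝ) / L ^ k
          < ∑ k ∈ Finset.range (m + 1), (Nat.factorial k : ℝ) / L ^ k := by
        rw [Finset.sum_range_succ]
        have := hfac m
        have : α * ((Nat.factorial m : ℝ) / L ^ m) < (Nat.factorial m : ℝ) / L ^ m := by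
          nlinarith [hfac m]
        rw [mul_div_assoc]
        linarith
      have hmono : ∑ k ∈ Finset.range (m + 1), (Nat.factorial k : ℝ) / L ^ k
          ≤ ∑ k ∈ Finset.range n, (Nat.factorial k : ℝ) / L ^ k := by
        apply Finset.sum_le_sum_of_subset_of_nonneg
        · exact Finset.range_subset_range.mpr hlt
        · intro k _ _; exact (hfac k).le
      linarith
    have hrem : 0 ≤ (L - (n : ℝ)) * x * (Nat.factorial n : ℝ) / L ^ (n + 1) := by
      have h1 : 0 ≤ L - (n : ℝ) := by linarith
      positivity
    nlinarith [mul_lt_mul_of_pos_left h1 hxL]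
  · -- m = n
    have hmn' : m = n := le_antisymm hmn hge
    rw [← hmn'] at *
    clear hn hge hmn
    have hmκL : (m : ℝ) ≤ κ * L := Nat.floor_le hκL0
    have hmL : (m : ℝ) < L := lt_of_le_of_lt hmκL hκLL
    have hαlt : α < L - (m : ℝ) := by
      rcases hα with h | h
      · rw [h]; linarith
      · rw [h]; push_cast; linarith
    have hkey : x / L * ((Nat.factorial m : ℝ) / L ^ m)
        = x * (Nat.factorial m : ℝ) / L ^ (m + 1) := by
      rw [pow_succ]
      field_simp
    have hpos : 0 < x * (Nat.factorial m : ℝ) / L ^ (m + 1) := by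
      have : (0:ℝ) < (Nat.factorial m : ℝ) := by exact_mod_cast (Nat.factorial_pos m)
      positivity
    have : α * (x * (Nat.factorial m : ℝ) / L ^ (m + 1))
        < (L - (m : ℝ)) * (x * (Nat.factorial m : ℝ) / L ^ (m + 1)) :=
      mul_lt_mul_of_pos_right hαlt hpos
    calc x / L * (α * (Nat.factorial m : ℝ) / L ^ m
          + ∑ k ∈ Finset.range m, (Nat.factorial k : ℝ) / L ^ k)
        = α * (x * (Nat.factorial m : ℝ) / L ^ (m + 1))
          + x / L * ∑ k ∈ Finset.range m, (Nat.factorial k : ℝ) / L ^ k := by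
          rw [← hkey]; ring
      _ < (L - (m : ℝ)) * (x * (Nat.factorial m : ℝ) / L ^ (m + 1))
          + x / L * ∑ k ∈ Finset.range m, (Nat.factorial k : ℝ) / L ^ k := by linarith
      _ = x / L * ∑ k ∈ Finset.range m, (Nat.factorial k : ℝ) / L ^ k
          + (L - (m : ℝ)) * x * (Nat.factorial m : ℝ) / L ^ (m + 1) := by ring
end

section
/- Let 0 < ω < 1 be real and let κ̄ ∈ (1,e) be the solution of κ(1 − log κ) = ω in (1,e). For every real x ≥ e, setting m̄ = ⌊κ̄·log x⌋ and ᾱ = κ̄·log(x) − m̄, and for α equal to either ᾱ or 1, one has li_*(x) ≤ li_{ω̄,α}(x). -/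
/-!
Write `L = log x`, `n = ⌊L⌋₊`, `m = ⌊κ L⌋₊` and `f k = k!/L^k ≥ 0`. Both approximations are
`x/L` times a partial sum of `f` plus a weighted last term: `li_*` is
`∑_{k<n} f k + (L - n) f n` and `li_{κ,α}` is `∑_{k<m} f k + α f m`. Since `κ ≥ 1` we have
`n ≤ m`. If `n < m`, the term `(L - n) f n ≤ f n` already occurs in the longer sum; if `n = m`,
the weight `L - n` is at most `α` because `L - n ≤ κL - m` and `L - n ≤ 1`.
-/

open Finset

theorem sum_range_add_mul_le_mul_add_sum_range {f : ℕ → ℝ} (hf : ∀ k, 0 ≤ f k) {n m : ℕ}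
    (hnm : n ≤ m) {t α : ℝ} (ht : t ≤ 1) (hα : 0 ≤ α) (htα : n = m → t ≤ α) :
    ∑ k ∈ range n, f k + t * f n ≤ α * f m + ∑ k ∈ range m, f k := by
  obtain rfl | hlt := hnm.eq_or_lt
  · nlinarith [hf n, htα rfl]
  · have hsplit : ∑ k ∈ range m, f k = ∑ k ∈ range n, f k + ∑ k ∈ Ico n m, f k := by
      rw [range_eq_Ico, range_eq_Ico, sum_Ico_consecutive _ n.zero_le hnm]
    have hfn : f n ≤ ∑ k ∈ Ico n m, f k :=
      single_le_sum (fun k _ => hf k) (mem_Ico.2 ⟨le_rfl, hlt⟩)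
    nlinarith [hf n, hf m]

theorem liStar_eq_div_mul {x : ℝ} (hx : Real.log x ≠ 0) :
    liStar x = x / Real.log x *
      (∑ k ∈ range ⌊Real.log x⌋₊, (Nat.factorial k : ℝ) / Real.log x ^ k
        + (Real.log x - ⌊Real.log x⌋₊)
          * ((Nat.factorial ⌊Real.log x⌋₊ : ℝ) / Real.log x ^ ⌊Real.log x⌋₊)) := by
  unfold liStar
  field_simp
  ring

theorem nonneg_of_eq_sub_floor_or_eq_one {y α : ℝ} (hy : 0 ≤ y)
    (hα : α = y - ⌊y⌋₊ ∨ α = 1) : 0 ≤ α := by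
  rcases hα with rfl | rfl
  · exact sub_nonneg.2 (Nat.floor_le hy)
  · exact zero_le_one

theorem sub_floor_le_of_floor_eq {L κ α : ℝ} (hL : 0 ≤ L) (hκ : 1 ≤ κ)
    (hα : α = κ * L - ⌊κ * L⌋₊ ∨ α = 1) (hfloor : ⌊L⌋₊ = ⌊κ * L⌋₊) : L - ⌊L⌋₊ ≤ α := by
  rcases hα with rfl | rfl
  · rw [hfloor]
    nlinarith
  · linarith [Nat.sub_one_lt_floor L]

theorem liStar_le_liApprox_upper_general (κ : ℝ)
    (hκ1 : 1 < κ)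
    (x : ℝ) (hx : Real.exp 1 ≤ x) (α : ℝ)
    (hα : α = κ * Real.log x - ⌊κ * Real.log x⌋₊ ∨ α = 1) :
    liStar x ≤ liApprox κ α x := by
  have hL : 1 ≤ Real.log x := by simpa using Real.log_le_log (Real.exp_pos 1) hx
  have hL0 : 0 < Real.log x := one_pos.trans_le hL
  have hκL : Real.log x ≤ κ * Real.log x := le_mul_of_one_le_left hL0.le hκ1.le
  have hfrac : Real.log x - ⌊Real.log x⌋₊ ≤ 1 := by linarith [Nat.sub_one_lt_floor (Real.log x)]
  rw [liStar_eq_div_mul hL0.ne', liApprox, mul_div_assoc]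
  gcongr ?_ * ?_
  · exact div_nonneg ((Real.exp_pos 1).le.trans hx) hL0.le
  · exact sum_range_add_mul_le_mul_add_sum_range
      (f := fun k => (Nat.factorial k : ℝ) / Real.log x ^ k) (fun k => by positivity)
      (Nat.floor_le_floor hκL) hfrac (nonneg_of_eq_sub_floor_or_eq_one (by positivity) hα)
      (sub_floor_le_of_floor_eq hL0.le hκ1.le hα)

/-- For `0 < ω < 1`, `κ̄ ∈ (1,e)` the solution of `κ(1−log κ) = ω`,
every real `x ≥ e`, `m̄ = ⌊κ̄·log x⌋`, `ᾱ = κ̄·log x − m̄`, and `α ∈ {ᾱ, 1}`,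
one has `li_*(x) ≤ li_{ω̄,α}(x)`. -/
theorem liStar_le_liApprox_upper (ω κ : ℝ) (hω0 : 0 < ω) (hω1 : ω < 1)
    (hκ1 : 1 < κ) (hκe : κ < Real.exp 1) (hsol : κ * (1 - Real.log κ) = ω)
    (x : ℝ) (hx : Real.exp 1 ≤ x) (α : ℝ)
    (hα : α = κ * Real.log x - ⌊κ * Real.log x⌋₊ ∨ α = 1) :
    liStar x ≤ liApprox κ α x :=
  liStar_le_liApprox_upper_general κ hκ1 x hx α hα
end

section
/- Let 0 < ω < 1 be real and let κ̲ ∈ (0,1) be the solution of κ(1 − log κ) = ω in (0,1). For every real x ≥ e, setting m̲ = ⌊κ̲·log x⌋ and α̲ = κ̲·log(x) − m̲, and for α equal to either 0 or α̲, one has 0 ≤ li_*(x) − li_{ω̲,α}(x) ≤ D̲ · x^(1−ω) / √(log x), where D̲ = √(8π/κ̲)·e^(13/12)·(1 + κ̲)/(1 − κ̲). -/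
/-!
Write `L = log x`, `m = ⌊κ L⌋`, `n = ⌊L⌋` and `a_k = k! / L^k`. Then
`li_*(x) − li_{κ,α}(x) = (x / L) (∑_{m ≤ k < n} a_k − α a_m + (L − n) a_n)`, which is nonnegative
since `α ≤ 1` (and `α ≤ L − n` when `m = n`), and at most `(x / L) ∑_{m ≤ k ≤ n} a_k`.

The upper Stirling bound `k! ≤ e √k (k/e)^k` gives `a_k ≤ e √k exp(−L f(k/L))` with the concave
function `f(t) = t (1 − log t)`; since `ω = f(κ)`, the factor `x exp(−L ω)` is `x^(1−ω)`. The head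
term `a_m` is controlled by the tangent of `f` at `m / L`. For `k > m` the chord of `f` over `[κ, 1]`
makes the terms decay geometrically, with ratio `exp(−(1 − ω)/(1 − κ))`, and `(1 − κ)² ≤ 2 (1 − ω)`
(from `u ≤ sinh u` at `u = −log κ`) bounds the geometric series by `3 / (1 − κ)`.
-/

open Real Finset
open scoped Nat

noncomputable def liTerm (L : ℝ) (k : ℕ) : ℝ := k ! / L ^ k

noncomputable def liRate (t : ℝ) : ℝ := t * (1 - log t)

lemma liRate_le_tangent {s t : ℝ} (hs : 0 < s) (ht : 0 < t) :
    liRate s ≤ liRate t - (s - t) * log t := by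
  have h : 1 - t / s ≤ log s - log t := by
    simpa [log_div hs.ne' ht.ne'] using one_sub_inv_le_log_of_pos (div_pos hs ht)
  have h' : s - t ≤ s * (log s - log t) := by
    calc s - t = s * (1 - t / s) := by field_simp
      _ ≤ s * (log s - log t) := by gcongr
  unfold liRate
  linarith

lemma liRate_le_liRate {s t : ℝ} (hs : 0 < s) (hst : s ≤ t) (ht : t ≤ 1) :
    liRate s ≤ liRate t := by
  have := liRate_le_tangent hs (hs.trans_le hst)
  nlinarith [log_nonpos (hs.le.trans hst) ht]

lemma concaveOn_liRate : ConcaveOn ℝ (Set.Ici 0) liRate := by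
  have h : liRate = fun t ↦ t + negMulLog t := by
    ext t; simp only [liRate, negMulLog]; ring
  rw [h]
  exact (concaveOn_id (convex_Ici 0)).add concaveOn_negMulLog

lemma liRate_chord {κ t : ℝ} (hκ : 0 ≤ κ) (hκt : κ ≤ t) (ht : t ≤ 1) :
    (1 - t) * liRate κ + (t - κ) ≤ (1 - κ) * liRate t := by
  rcases hκt.eq_or_lt with rfl | hκt
  · simp
  rcases ht.eq_or_lt with rfl | ht
  · simp [liRate]
  have := concaveOn_liRate.neg.secant_mono_aux1 (Set.mem_Ici.2 hκ) (Set.mem_Ici.2 zero_le_one)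
    hκt ht
  simp only [Pi.neg_apply, liRate, log_one] at this ⊢
  linarith

lemma one_sub_sq_le_two_mul_one_sub_liRate {κ : ℝ} (h0 : 0 < κ) (h1 : κ ≤ 1) :
    (1 - κ) ^ 2 ≤ 2 * (1 - liRate κ) := by
  have hsinh : -log κ ≤ (κ⁻¹ - κ) / 2 := by
    have := self_le_sinh_iff.2 (neg_nonneg.2 (log_nonpos h0.le h1))
    rwa [sinh_eq, neg_neg, exp_neg, exp_log h0] at this
  have : -(2 * κ * log κ) ≤ 1 - κ ^ 2 := by
    have := mul_le_mul_of_nonneg_left hsinh (by positivity : (0 : ℝ) ≤ 2 * κ)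
    field_simp at this
    linarith
  unfold liRate
  nlinarith

lemma liTerm_nonneg {L : ℝ} (hL : 0 ≤ L) (k : ℕ) : 0 ≤ liTerm L k := by
  unfold liTerm; positivity

lemma factorial_le_exp_one_mul_sqrt_mul_pow {k : ℕ} (hk : k ≠ 0) :
    (k ! : ℝ) ≤ exp 1 * √k * (k / exp 1) ^ k := by
  obtain ⟨j, rfl⟩ := Nat.exists_eq_succ_of_ne_zero hk
  have h : Stirling.stirlingSeq (j + 1) ≤ exp 1 / √2 := by
    simpa [Stirling.stirlingSeq_one] using Stirling.stirlingSeq'_antitone (Nat.zero_le j)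
  rw [Stirling.stirlingSeq, div_le_iff₀ (by positivity)] at h
  calc ((j + 1)! : ℝ) ≤ exp 1 / √2 * (√(2 * (j + 1 : ℕ)) * ((j + 1 : ℕ) / exp 1) ^ (j + 1)) := h
    _ = exp 1 * √(j + 1 : ℕ) * ((j + 1 : ℕ) / exp 1) ^ (j + 1) := by
      rw [sqrt_mul zero_le_two]; field_simp

lemma liTerm_le_exp_one_mul_sqrt_mul_exp {L : ℝ} (hL : 0 < L) {k : ℕ} (hk : k ≠ 0) :
    liTerm L k ≤ exp 1 * √k * exp (-(L * liRate (k / L))) := by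
  have hk0 : (0 : ℝ) < k := by positivity
  have hpow : ((k : ℝ) / exp 1) ^ k / L ^ k = exp (-(L * liRate (k / L))) := by
    rw [← div_pow, ← exp_log (show 0 < (k : ℝ) / exp 1 / L by positivity), ← exp_nat_mul,
      log_div (by positivity) hL.ne', log_div hk0.ne' (exp_pos 1).ne', log_exp, liRate,
      log_div hk0.ne' hL.ne']
    congr 1
    field_simp
    ring
  calc liTerm L k ≤ exp 1 * √k * (k / exp 1) ^ k / L ^ k := by
        unfold liTerm; gcongr; exact factorial_le_exp_one_mul_sqrt_mul_pow hk
    _ = exp 1 * √k * exp (-(L * liRate (k / L))) := by rw [mul_div_assoc, hpow]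

lemma one_le_exp_one_mul_mul_exp {κ L : ℝ} (hκ0 : 0 < κ) (hκL : κ * L ≤ 1) (hL : 1 ≤ L) :
    1 ≤ exp 1 * L * exp (-(L * liRate κ)) := by
  have hL0 : 0 < L := one_pos.trans_le hL
  have hrate : liRate κ ≤ liRate (1 / L) :=
    liRate_le_liRate hκ0 (by rwa [le_div_iff₀ hL0]) (by rwa [div_le_one hL0])
  -- Stirling's bound is an equality at `k = 1`, and `a₀ = L a₁`
  have h1 : 1 / L ≤ exp 1 * exp (-(L * liRate κ)) :=
    calc 1 / L = liTerm L 1 := by simp [liTerm]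
      _ ≤ exp 1 * √(1 : ℕ) * exp (-(L * liRate ((1 : ℕ) / L))) :=
        liTerm_le_exp_one_mul_sqrt_mul_exp hL0 one_ne_zero
      _ ≤ exp 1 * exp (-(L * liRate κ)) := by
        simp only [Nat.cast_one, sqrt_one, mul_one]; gcongr
  calc 1 = L * (1 / L) := by field_simp
    _ ≤ L * (exp 1 * exp (-(L * liRate κ))) := by gcongr
    _ = exp 1 * L * exp (-(L * liRate κ)) := by ring

lemma liTerm_le_of_le_mul_le_succ {κ L : ℝ} (hκ0 : 0 < κ) (hκ1 : κ ≤ 1) (hL : 0 < L) {m : ℕ}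
    (hm : m ≠ 0) (hmκ : m ≤ κ * L) (hκm : κ * L ≤ m + 1) :
    liTerm L m ≤ exp 1 * (L / √m) * exp (-(L * liRate κ)) := by
  set t := (m : ℝ) / L
  have ht0 : 0 < t := by positivity
  have htκ : t ≤ κ := by rw [div_le_iff₀ hL]; linarith
  -- the tangent of `liRate` at `t`, with `L (κ - t) = κ L - m ≤ 1`
  have hexp : exp (-(L * liRate t)) ≤ exp (-(L * liRate κ)) * (L / m) := by
    have htan := mul_le_mul_of_nonneg_left (liRate_le_tangent hκ0 ht0) hL.le
    have hgap : L * (κ - t) ≤ 1 := by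
      rw [mul_sub, mul_div_cancel₀ _ hL.ne']; linarith
    have hlogt : log t ≤ 0 := log_nonpos ht0.le (htκ.trans hκ1)
    calc exp (-(L * liRate t)) ≤ exp (-(L * liRate κ) + -log t) := by
          gcongr; nlinarith
      _ = exp (-(L * liRate κ)) * (L / m) := by
        rw [exp_add, exp_neg (log t), exp_log ht0, inv_div]
  calc liTerm L m ≤ exp 1 * √m * exp (-(L * liRate t)) :=
        liTerm_le_exp_one_mul_sqrt_mul_exp hL hm
    _ ≤ exp 1 * √m * (exp (-(L * liRate κ)) * (L / m)) := by gcongr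
    _ = exp 1 * (L * (√m / m)) * exp (-(L * liRate κ)) := by ring
    _ = exp 1 * (L / √m) * exp (-(L * liRate κ)) := by rw [sqrt_div_self', mul_one_div]

lemma liTerm_floor_mul_le {κ L : ℝ} (hκ0 : 0 < κ) (hκ1 : κ ≤ 1) (hL : 1 ≤ L) :
    liTerm L ⌊κ * L⌋₊ ≤ exp 1 * √(2 / κ) * √L * exp (-(L * liRate κ)) := by
  have hL0 : 0 < L := one_pos.trans_le hL
  set m := ⌊κ * L⌋₊
  have hmle : (m : ℝ) ≤ κ * L := Nat.floor_le (by positivity)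
  have hmlt : κ * L < m + 1 := Nat.lt_floor_add_one _
  rw [mul_assoc (exp 1)]
  rcases Nat.eq_zero_or_pos m with hm0 | hm1
  · have hκL : κ * L ≤ 1 := by simpa [hm0] using hmlt.le
    have hsqrt : L ≤ √(2 / κ) * √L := by
      rw [← sqrt_mul (by positivity), le_sqrt hL0.le (by positivity), div_mul_eq_mul_div,
        le_div_iff₀ hκ0]
      nlinarith
    calc liTerm L m = 1 := by simp [hm0, liTerm]
      _ ≤ exp 1 * L * exp (-(L * liRate κ)) := one_le_exp_one_mul_mul_exp hκ0 hκL hL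
      _ ≤ exp 1 * (√(2 / κ) * √L) * exp (-(L * liRate κ)) := by gcongr
  · have hsqrt : L / √m ≤ √(2 / κ) * √L := by
      have : κ * L ≤ 2 * m := by
        have : (1 : ℝ) ≤ m := by exact_mod_cast hm1
        linarith
      rw [← sqrt_mul (by positivity), div_le_iff₀ (by positivity), ← sqrt_mul (by positivity),
        le_sqrt hL0.le (by positivity), div_mul_eq_mul_div, div_mul_eq_mul_div, le_div_iff₀ hκ0]
      nlinarith
    calc liTerm L m ≤ exp 1 * (L / √m) * exp (-(L * liRate κ)) :=
          liTerm_le_of_le_mul_le_succ hκ0 hκ1 hL0 hm1.ne' hmle hmlt.le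
      _ ≤ exp 1 * (√(2 / κ) * √L) * exp (-(L * liRate κ)) := by gcongr

lemma liTerm_le_of_mul_le_le {κ L : ℝ} (hκ0 : 0 < κ) (hκ1 : κ < 1) (hL : 0 < L) {k : ℕ}
    (hκk : κ * L ≤ k) (hkL : k ≤ L) :
    liTerm L k ≤
      exp 1 * √L * exp (-(L * liRate κ)) * exp (-((k - κ * L) * ((1 - liRate κ) / (1 - κ)))) := by
  have hk : k ≠ 0 := by rintro rfl; simp at hκk; nlinarith
  set t := (k : ℝ) / L
  have hκt : κ ≤ t := by rw [le_div_iff₀ hL]; linarith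
  have ht1 : t ≤ 1 := by rwa [div_le_one hL]
  have hLt : L * (t - κ) = k - κ * L := by rw [mul_sub, mul_div_cancel₀ _ hL.ne']; ring
  have hchord : liRate κ + (t - κ) * ((1 - liRate κ) / (1 - κ)) ≤ liRate t := by
    have h := liRate_chord hκ0.le hκt ht1
    have h1κ : 0 < 1 - κ := by linarith
    rw [mul_div_assoc', ← le_sub_iff_add_le', div_le_iff₀ h1κ]
    linarith
  calc liTerm L k ≤ exp 1 * √k * exp (-(L * liRate t)) :=
        liTerm_le_exp_one_mul_sqrt_mul_exp hL hk
    _ ≤ exp 1 * √L * exp (-(L * liRate κ) + -((k - κ * L) * ((1 - liRate κ) / (1 - κ)))) := by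
        gcongr
        rw [← hLt]
        nlinarith [mul_le_mul_of_nonneg_left hchord hL.le]
    _ = _ := by rw [exp_add]; ring

lemma one_div_one_sub_exp_neg_le {g : ℝ} (hg : 0 < g) : 1 / (1 - exp (-g)) ≤ 1 + 1 / g := by
  have hr : exp (-g) ≤ 1 / (1 + g) := by
    rw [exp_neg, ← one_div]; gcongr; linarith [add_one_le_exp g]
  have : g / (1 + g) ≤ 1 - exp (-g) := by
    have : 1 / (1 + g) = 1 - g / (1 + g) := by field_simp; ring
    linarith
  calc 1 / (1 - exp (-g)) ≤ 1 / (g / (1 + g)) := one_div_le_one_div_of_le (by positivity) this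
    _ = 1 + 1 / g := by field_simp; ring

lemma sum_exp_neg_mul_le {g : ℝ} (hg : 0 < g) (c : ℝ) (N : ℕ) :
    ∑ k ∈ Ico (⌊c⌋₊ + 1) N, exp (-((k - c) * g)) ≤ 1 + 1 / g := by
  have hr : exp (-g) < 1 := exp_lt_one_iff.2 (neg_lt_zero.2 hg)
  have hterm (k : ℕ) : exp (-((k - c) * g)) = exp (c * g) * exp (-g) ^ k := by
    rw [← exp_nat_mul, ← exp_add]; ring_nf
  have hfirst : exp (c * g) * exp (-g) ^ (⌊c⌋₊ + 1) ≤ 1 := by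
    rw [← hterm, exp_le_one_iff, neg_nonpos]
    have := Nat.lt_floor_add_one c
    exact mul_nonneg (by push_cast; linarith) hg.le
  calc ∑ k ∈ Ico (⌊c⌋₊ + 1) N, exp (-((k - c) * g))
      = exp (c * g) * ∑ k ∈ Ico (⌊c⌋₊ + 1) N, exp (-g) ^ k := by
        simp only [hterm, mul_sum]
    _ ≤ exp (c * g) * (exp (-g) ^ (⌊c⌋₊ + 1) / (1 - exp (-g))) := by
        gcongr; exact geom_sum_Ico_le_of_lt_one (exp_pos _).le hr
    _ = exp (c * g) * exp (-g) ^ (⌊c⌋₊ + 1) * (1 / (1 - exp (-g))) := by ring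
    _ ≤ 1 * (1 + 1 / g) := by
        gcongr; exact one_div_one_sub_exp_neg_le hg
    _ = 1 + 1 / g := one_mul _

lemma sum_liTerm_Ico_le {κ L : ℝ} (hκ0 : 0 < κ) (hκ1 : κ < 1) (hL : 0 < L) :
    ∑ k ∈ Ico (⌊κ * L⌋₊ + 1) (⌊L⌋₊ + 1), liTerm L k ≤
      3 * exp 1 / (1 - κ) * √L * exp (-(L * liRate κ)) := by
  set g := (1 - liRate κ) / (1 - κ)
  have h1κ : 0 < 1 - κ := by linarith
  have hsq := one_sub_sq_le_two_mul_one_sub_liRate hκ0 hκ1.le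
  have hg : 0 < g := div_pos (by nlinarith) h1κ
  have hg' : 1 + 1 / g ≤ 3 / (1 - κ) := by
    have h1 : 1 ≤ 1 / (1 - κ) := by rw [le_div_iff₀ h1κ]; linarith
    have h2 : 1 / g ≤ 2 / (1 - κ) := by
      rw [one_div_div, div_le_div_iff₀ (by nlinarith) h1κ]; nlinarith
    linarith [show 3 / (1 - κ) = 1 / (1 - κ) + 2 / (1 - κ) by ring]
  calc ∑ k ∈ Ico (⌊κ * L⌋₊ + 1) (⌊L⌋₊ + 1), liTerm L k
      ≤ ∑ k ∈ Ico (⌊κ * L⌋₊ + 1) (⌊L⌋₊ + 1),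
          exp 1 * √L * exp (-(L * liRate κ)) * exp (-((k - κ * L) * g)) := by
        refine sum_le_sum fun k hk ↦ liTerm_le_of_mul_le_le hκ0 hκ1 hL ?_ ?_
        · rw [mem_Ico] at hk
          exact (Nat.lt_floor_add_one _).le.trans (by exact_mod_cast hk.1)
        · rw [mem_Ico, Nat.lt_succ_iff] at hk
          exact (Nat.cast_le.2 hk.2).trans (Nat.floor_le hL.le)
    _ = exp 1 * √L * exp (-(L * liRate κ)) *
          ∑ k ∈ Ico (⌊κ * L⌋₊ + 1) (⌊L⌋₊ + 1), exp (-((k - κ * L) * g)) := by rw [mul_sum]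
    _ ≤ exp 1 * √L * exp (-(L * liRate κ)) * (3 / (1 - κ)) := by
        gcongr; exact (sum_exp_neg_mul_le hg _ _).trans hg'
    _ = 3 * exp 1 / (1 - κ) * √L * exp (-(L * liRate κ)) := by ring

lemma exp_one_mul_sqrt_add_le {κ : ℝ} (hκ0 : 0 < κ) (hκ1 : κ < 1) :
    exp 1 * √(2 / κ) + 3 * exp 1 / (1 - κ) ≤
      √(8 * π / κ) * exp (13 / 12) * (1 + κ) / (1 - κ) := by
  have h1κ : 0 < 1 - κ := by linarith
  have hsκ : 0 < √κ := sqrt_pos.2 hκ0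
  have hsκ1 : √κ ≤ 1 := sqrt_le_one.2 hκ1.le
  have hs2 : √2 ≤ 2 := by rw [sqrt_le_left zero_le_two]; norm_num
  have hs8π : 5 ≤ √(8 * π) := by rw [le_sqrt (by norm_num) (by positivity)]; nlinarith [pi_gt_d2]
  have he : exp 1 ≤ exp (13 / 12) := exp_le_exp.2 (by norm_num)
  have key : exp 1 * √2 * (1 - κ) + 3 * exp 1 * √κ ≤ √(8 * π) * exp (13 / 12) * (1 + κ) :=
    calc exp 1 * √2 * (1 - κ) + 3 * exp 1 * √κ ≤ exp 1 * 2 * 1 + 3 * exp 1 * 1 := by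
          gcongr; linarith
      _ = 5 * exp 1 := by ring
      _ ≤ √(8 * π) * exp (13 / 12) * 1 := by rw [mul_one]; gcongr
      _ ≤ √(8 * π) * exp (13 / 12) * (1 + κ) := by gcongr; linarith
  calc exp 1 * √(2 / κ) + 3 * exp 1 / (1 - κ)
      = (exp 1 * √2 * (1 - κ) + 3 * exp 1 * √κ) / (√κ * (1 - κ)) := by
        rw [sqrt_div zero_le_two]; field_simp
    _ ≤ √(8 * π) * exp (13 / 12) * (1 + κ) / (√κ * (1 - κ)) := by gcongr
    _ = √(8 * π / κ) * exp (13 / 12) * (1 + κ) / (1 - κ) := by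
        rw [sqrt_div (by positivity)]; field_simp

noncomputable def liGap (L α : ℝ) (m n : ℕ) : ℝ :=
  ∑ k ∈ Ico m n, liTerm L k - α * liTerm L m + (L - n) * liTerm L n

lemma liStar_sub_liApprox_eq {κ α x : ℝ} (hκ : κ ≤ 1) (hL : 0 < log x) :
    liStar x - liApprox κ α x = x / log x * liGap (log x) α ⌊κ * log x⌋₊ ⌊log x⌋₊ := by
  have hmn : ⌊κ * log x⌋₊ ≤ ⌊log x⌋₊ := Nat.floor_mono (by nlinarith)
  simp only [liStar, liApprox, liGap, liTerm, sum_Ico_eq_sub _ hmn, pow_succ]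
  field_simp
  ring

lemma liGap_nonneg {L α : ℝ} {m n : ℕ} (hmn : m ≤ n) (hnL : n ≤ L) (hα : α ≤ 1)
    (hαn : m = n → α ≤ L - n) : 0 ≤ liGap L α m n := by
  have hL : 0 ≤ L := n.cast_nonneg.trans hnL
  have hn := liTerm_nonneg hL n
  unfold liGap
  rcases hmn.eq_or_lt with rfl | hlt
  · simp only [Ico_self, sum_empty]
    nlinarith [hαn rfl]
  · have : liTerm L m ≤ ∑ k ∈ Ico m n, liTerm L k :=
      single_le_sum (fun k _ ↦ liTerm_nonneg hL k) (left_mem_Ico.2 hlt)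
    nlinarith [liTerm_nonneg hL m]

lemma liGap_le {L α : ℝ} {m n : ℕ} (hL : 0 ≤ L) (hmn : m ≤ n) (hα : 0 ≤ α) (hLn : L - n ≤ 1) :
    liGap L α m n ≤ liTerm L m + ∑ k ∈ Ico (m + 1) (n + 1), liTerm L k := by
  rw [← sum_eq_sum_Ico_succ_bot (Nat.lt_succ_of_le hmn), sum_Ico_succ_top hmn, liGap]
  nlinarith [liTerm_nonneg hL m, liTerm_nonneg hL n]

lemma liGap_floor_nonneg {κ L α : ℝ} (hκ : κ ≤ 1) (hL : 0 ≤ L)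
    (hα : α = 0 ∨ α = κ * L - ⌊κ * L⌋₊) : 0 ≤ liGap L α ⌊κ * L⌋₊ ⌊L⌋₊ := by
  have hm := Nat.lt_floor_add_one (κ * L)
  have hn := Nat.floor_le hL
  refine liGap_nonneg (Nat.floor_mono (by nlinarith)) hn ?_ fun h ↦ ?_
  · rcases hα with rfl | rfl <;> linarith
  · rw [← h] at hn ⊢; rcases hα with rfl | rfl <;> nlinarith

lemma liGap_floor_le {κ L α : ℝ} (hκ0 : 0 < κ) (hκ1 : κ < 1) (hL : 1 ≤ L) (hα : 0 ≤ α) :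
    liGap L α ⌊κ * L⌋₊ ⌊L⌋₊ ≤
      √(8 * π / κ) * exp (13 / 12) * (1 + κ) / (1 - κ) * √L * exp (-(L * liRate κ)) :=
  calc liGap L α ⌊κ * L⌋₊ ⌊L⌋₊
      ≤ liTerm L ⌊κ * L⌋₊ + ∑ k ∈ Ico (⌊κ * L⌋₊ + 1) (⌊L⌋₊ + 1), liTerm L k :=
        liGap_le (by positivity) (Nat.floor_mono (by nlinarith)) hα
          (by linarith [Nat.lt_floor_add_one L])
    _ ≤ exp 1 * √(2 / κ) * √L * exp (-(L * liRate κ))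
          + 3 * exp 1 / (1 - κ) * √L * exp (-(L * liRate κ)) :=
        add_le_add (liTerm_floor_mul_le hκ0 hκ1.le hL) (sum_liTerm_Ico_le hκ0 hκ1 (by positivity))
    _ = (exp 1 * √(2 / κ) + 3 * exp 1 / (1 - κ)) * √L * exp (-(L * liRate κ)) := by ring
    _ ≤ √(8 * π / κ) * exp (13 / 12) * (1 + κ) / (1 - κ) * √L * exp (-(L * liRate κ)) := by
        gcongr; exact exp_one_mul_sqrt_add_le hκ0 hκ1

lemma mul_exp_neg_log_mul {x : ℝ} (hx : 0 < x) (ω : ℝ) :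
    x * exp (-(log x * ω)) = x ^ (1 - ω) := by
  rw [rpow_def_of_pos hx, mul_one_sub, exp_sub, exp_log hx, exp_neg, div_eq_mul_inv]

theorem liStar_sub_liApprox_lower_le_D_general (ω κ : ℝ)
    (hκ0 : 0 < κ) (hκ1 : κ < 1) (hsol : κ * (1 - Real.log κ) = ω)
    (x : ℝ) (hx : Real.exp 1 ≤ x) (α : ℝ)
    (hα : α = 0 ∨ α = κ * Real.log x - ⌊κ * Real.log x⌋₊) :
    0 ≤ liStar x - liApprox κ α x ∧
      liStar x - liApprox κ α x ≤
        Real.sqrt (8 * Real.pi / κ) * Real.exp (13 / 12) * (1 + κ) / (1 - κ)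
          * x ^ (1 - ω) / Real.sqrt (Real.log x) := by
  have hx0 : 0 < x := (exp_pos 1).trans_le hx
  have hL : 1 ≤ log x := (le_log_iff_exp_le hx0).2 hx
  have hα0 : 0 ≤ α := by
    rcases hα with rfl | rfl
    exacts [le_rfl, sub_nonneg.2 (Nat.floor_le (by positivity))]
  rw [liStar_sub_liApprox_eq hκ1.le (by linarith)]
  refine ⟨mul_nonneg (by positivity) (liGap_floor_nonneg hκ1.le (by linarith) hα), ?_⟩
  set D := √(8 * π / κ) * exp (13 / 12) * (1 + κ) / (1 - κ)
  calc x / log x * liGap (log x) α ⌊κ * log x⌋₊ ⌊log x⌋₊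
      ≤ x / log x * (D * √(log x) * exp (-(log x * liRate κ))) := by
        gcongr; exact liGap_floor_le hκ0 hκ1 hL hα0
    _ = D * (x * exp (-(log x * liRate κ))) * (√(log x) / log x) := by ring
    _ = D * x ^ (1 - ω) / √(log x) := by
        rw [mul_exp_neg_log_mul hx0, liRate, hsol, sqrt_div_self', mul_one_div]

/-- For `0 < ω < 1`, `κ̲ ∈ (0,1)` the solution of `κ(1−log κ) = ω`,
every real `x ≥ e`, `m̲ = ⌊κ̲·log x⌋`, `α̲ = κ̲·log x − m̲`, and `α ∈ {0, α̲}`,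
one has `0 ≤ li_*(x) − li_{ω̲,α}(x) ≤ D̲·x^(1−ω)/√(log x)` with
`D̲ = √(8π/κ̲)·e^(13/12)·(1+κ̲)/(1−κ̲)`. -/
theorem liStar_sub_liApprox_lower_le_D (ω κ : ℝ) (hω0 : 0 < ω) (hω1 : ω < 1)
    (hκ0 : 0 < κ) (hκ1 : κ < 1) (hsol : κ * (1 - Real.log κ) = ω)
    (x : ℝ) (hx : Real.exp 1 ≤ x) (α : ℝ)
    (hα : α = 0 ∨ α = κ * Real.log x - ⌊κ * Real.log x⌋₊) :
    0 ≤ liStar x - liApprox κ α x ∧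
      liStar x - liApprox κ α x ≤
        Real.sqrt (8 * Real.pi / κ) * Real.exp (13 / 12) * (1 + κ) / (1 - κ)
          * x ^ (1 - ω) / Real.sqrt (Real.log x) :=
  liStar_sub_liApprox_lower_le_D_general ω κ hκ0 hκ1 hsol x hx α hα
end

section
/- Let 0 < ω < 1 be real and let κ̄ ∈ (1,e) be the solution of κ(1 − log κ) = ω in (1,e). For every real x ≥ e, setting m̄ = ⌊κ̄·log x⌋, ᾱ = κ̄·log(x) − m̄, n = ⌊log x⌋, and C_{κ̄} = √(2π/κ̄)·e^(13/12), and for α equal to either ᾱ or 1, one has 0 ≤ li_{ω̄,α}(x) − li_*(x) ≤ (C_{κ̄}·x^(1−ω)/√(log x)) · (1 + Σ_{k=1}^{m̄−n} (log x)^k · Π_{i=0}^{k−1} 1/(m̄ − i)). -/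
open Real Finset


lemma aux_exp1112 : Real.exp (11/12) ≤ Real.sqrt (2*Real.pi) := by
  have h1 : Real.exp (11/6) ≤ 2 * Real.pi := by
    have h2 : Real.exp (11/6) ≤ 6.28 := by
      have h6 : Real.exp (11/6) ^ 6 = Real.exp 1 ^ 11 := by
        rw [← Real.exp_nat_mul, ← Real.exp_nat_mul]; norm_num
      have h8 : Real.exp 1 ^ 11 < 2.7182818286 ^ 11 :=
        pow_lt_pow_left₀ Real.exp_one_lt_d9 (le_of_lt (Real.exp_pos 1)) (by norm_num)
      have h9 : (2.7182818286 : ℝ) ^ 11 < 6.28 ^ 6 := by norm_num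
      have h10 : Real.exp (11/6) ^ 6 < 6.28 ^ 6 := by rw [h6]; linarith
      exact le_of_lt (lt_of_pow_lt_pow_left₀ 6 (by norm_num) h10)
    linarith [Real.pi_gt_d6]
  have h3 : Real.exp (11/12) = Real.sqrt (Real.exp (11/6)) := by
    rw [show (11/6 : ℝ) = (11/12) * 2 by norm_num, Real.exp_mul,
      Real.rpow_two, Real.sqrt_sq (le_of_lt (Real.exp_pos _))]
  rw [h3]
  exact Real.sqrt_le_sqrt h1

lemma aux_factorial (m : ℕ) (hm : 1 ≤ m) :
    (m.factorial : ℝ) ≤ Real.exp 1 * Real.sqrt m * ((m : ℝ) / Real.exp 1) ^ m := by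
  have h1 : Stirling.stirlingSeq m ≤ Real.exp 1 / Real.sqrt 2 := by
    rw [← Stirling.stirlingSeq_one]
    obtain ⟨k, rfl⟩ := Nat.exists_eq_add_of_le hm
    have := Stirling.stirlingSeq'_antitone (Nat.zero_le k)
    simpa [Nat.succ_eq_add_one, Nat.add_comm] using this
  have hmpos : (0:ℝ) < m := by exact_mod_cast hm
  have hden : (0:ℝ) < Real.sqrt (2 * m) * ((m : ℝ) / Real.exp 1) ^ m := by positivity
  have h2 : (m.factorial : ℝ) = Stirling.stirlingSeq m * (Real.sqrt (2 * m) * ((m : ℝ) / Real.exp 1) ^ m) := by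
    rw [Stirling.stirlingSeq, div_mul_cancel₀ _ (ne_of_gt hden)]
  rw [h2]
  have h3 : Real.sqrt (2 * m) = Real.sqrt 2 * Real.sqrt m := Real.sqrt_mul (by norm_num) _
  have hsq2 : (0:ℝ) < Real.sqrt 2 := by positivity
  calc Stirling.stirlingSeq m * (Real.sqrt (2 * m) * ((m : ℝ) / Real.exp 1) ^ m)
      ≤ (Real.exp 1 / Real.sqrt 2) * (Real.sqrt (2 * m) * ((m : ℝ) / Real.exp 1) ^ m) := by
        apply mul_le_mul_of_nonneg_right h1 (le_of_lt hden)
    _ = Real.exp 1 * Real.sqrt m * ((m : ℝ) / Real.exp 1) ^ m := by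
        rw [h3]; field_simp

lemma aux_prod (m : ℕ) : ∀ k : ℕ, k ≤ m →
    ∏ i ∈ Finset.range k, ((m:ℝ) - (i:ℝ)) = (m.factorial : ℝ) / ((m - k).factorial : ℝ) := by
  intro k
  induction k with
  | zero =>
    intro _
    simp [div_self (by positivity : ((m.factorial : ℝ)) ≠ 0)]
  | succ k ih =>
    intro hk
    have hk' : k ≤ m := Nat.le_of_succ_le hk
    have h1 : m - k = (m - (k+1)) + 1 := by omega
    have h3 : ((m - k).factorial : ℝ) = ((m:ℝ) - k) * ((m - (k+1)).factorial : ℝ) := by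
      have h2 : ((m - (k+1) : ℕ) : ℝ) = (m:ℝ) - (k:ℝ) - 1 := by
        rw [Nat.cast_sub hk]; push_cast; ring
      have h2' : ((m - (1+k) : ℕ) : ℝ) = (m:ℝ) - (k:ℝ) - 1 := by
        rw [Nat.cast_sub (by omega : 1 + k ≤ m)]; push_cast; ring
      rw [h1, Nat.factorial_succ]
      push_cast [h2, h2']
      ring
    rw [Finset.prod_range_succ, ih hk', h3]
    have hkm : (k:ℝ) < (m:ℝ) := by exact_mod_cast hk
    have hne : (m:ℝ) - k ≠ 0 := by linarith
    have hpos : ((m - (k+1)).factorial : ℝ) ≠ 0 := by positivity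
    field_simp

lemma aux_key (ω κ L : ℝ) (hκ1 : 1 < κ) (hκe : κ ≤ Real.exp 1)
    (hsol : κ * (1 - Real.log κ) = ω) (hL : 1 ≤ L)
    (hfac : ∀ m : ℕ, 1 ≤ m →
      (m.factorial : ℝ) ≤ Real.exp 1 * Real.sqrt m * ((m : ℝ) / Real.exp 1) ^ m)
    (hexp : Real.exp (11/12) ≤ Real.sqrt (2*Real.pi)) :
    ((⌊κ*L⌋₊).factorial : ℝ) ≤
      Real.sqrt (2*Real.pi/κ) * Real.exp (13/12) * Real.exp (-(ω*L)) * L ^ ⌊κ*L⌋₊ *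
        Real.sqrt L := by
  set m := ⌊κ*L⌋₊ with hm
  have hLpos : (0:ℝ) < L := lt_of_lt_of_le one_pos hL
  have hκpos : (0:ℝ) < κ := lt_trans one_pos hκ1
  have hκL1 : 1 ≤ κ * L := by nlinarith
  have hκLpos : (0:ℝ) < κ * L := by linarith
  have hm1 : 1 ≤ m := Nat.le_floor (by exact_mod_cast hκL1)
  have hmle : (m:ℝ) ≤ κ * L := Nat.floor_le (le_of_lt hκLpos)
  have hmlt : κ * L < (m:ℝ) + 1 := Nat.lt_floor_add_one _
  have hmpos : (0:ℝ) < (m:ℝ) := by exact_mod_cast hm1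
  set β := κ * L - (m:ℝ) with hβ
  have hβ0 : 0 ≤ β := by simp [hβ]; linarith
  have hβ1 : β ≤ 1 := by simp [hβ]; linarith
  have hlogκ : Real.log κ ≤ 1 := by
    calc Real.log κ ≤ Real.log (Real.exp 1) := Real.log_le_log hκpos hκe
      _ = 1 := Real.log_exp 1
  have hlogκ0 : 0 ≤ Real.log κ := Real.log_nonneg (le_of_lt hκ1)
  -- step 1
  have hpow : ((m:ℝ)/Real.exp 1)^m = Real.exp ((m:ℝ) * (Real.log m - 1)) := by
    rw [show (m:ℝ)/Real.exp 1 = Real.exp (Real.log m - 1) by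
      rw [Real.exp_sub, Real.exp_log hmpos], ← Real.exp_nat_mul]
  have h1 : (m.factorial : ℝ) ≤ Real.exp 1 * Real.sqrt m * Real.exp ((m:ℝ) * (Real.log m - 1)) := by
    rw [← hpow]; exact hfac m hm1
  -- step 2
  have h2 : (m:ℝ) * (Real.log m - 1) ≤ (m:ℝ) * (Real.log (κ*L) - 1) := by
    have := Real.log_le_log hmpos hmle
    nlinarith
  -- step 3
  have h3 : (m:ℝ) * (Real.log (κ*L) - 1) = -(ω*L) + (m:ℝ) * Real.log L + β * (1 - Real.log κ) := by
    have hlogκL : Real.log (κ*L) = Real.log κ + Real.log L :=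
      Real.log_mul (ne_of_gt hκpos) (ne_of_gt hLpos)
    have hmeq : (m:ℝ) = κ*L - β := by simp [hβ]
    rw [hlogκL, hmeq]
    nlinarith [hsol]
  -- step 4
  have h4 : Real.sqrt (m:ℝ) ≤ Real.sqrt κ * Real.sqrt L := by
    rw [← Real.sqrt_mul (le_of_lt hκpos)]
    exact Real.sqrt_le_sqrt hmle
  -- step 5 : e * √κ * exp (β*(1 - log κ)) ≤ √(2π/κ) * exp (13/12)
  have hsqκ : (0:ℝ) < Real.sqrt κ := Real.sqrt_pos.mpr hκpos
  have h5 : Real.exp 1 * Real.sqrt κ * Real.exp (β * (1 - Real.log κ)) ≤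
      Real.sqrt (2*Real.pi/κ) * Real.exp (13/12) := by
    have hdiv : Real.sqrt (2*Real.pi/κ) = Real.sqrt (2*Real.pi) / Real.sqrt κ :=
      Real.sqrt_div (by positivity) κ
    rw [hdiv, div_mul_eq_mul_div, le_div_iff₀ hsqκ]
    have hκκ : Real.sqrt κ * Real.sqrt κ = κ := Real.mul_self_sqrt (le_of_lt hκpos)
    have hlhs : Real.exp 1 * Real.sqrt κ * Real.exp (β * (1 - Real.log κ)) * Real.sqrt κ =
        Real.exp (1 + Real.log κ + β * (1 - Real.log κ)) := by
      rw [Real.exp_add, Real.exp_add, Real.exp_log hκpos]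
      linear_combination (Real.exp 1 * Real.exp (β * (1 - Real.log κ))) * hκκ
    rw [hlhs]
    have hE : 1 + Real.log κ + β * (1 - Real.log κ) ≤ 11/12 + 13/12 := by nlinarith
    calc Real.exp (1 + Real.log κ + β * (1 - Real.log κ)) ≤ Real.exp (11/12 + 13/12) :=
          Real.exp_le_exp.mpr hE
      _ = Real.exp (11/12) * Real.exp (13/12) := Real.exp_add _ _
      _ ≤ Real.sqrt (2*Real.pi) * Real.exp (13/12) := by
          apply mul_le_mul_of_nonneg_right hexp (le_of_lt (Real.exp_pos _))
  -- assembly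
  have hexpL : Real.exp ((m:ℝ) * Real.log L) = L ^ m := by
    rw [Real.exp_nat_mul, Real.exp_log hLpos]
  calc (m.factorial : ℝ)
      ≤ Real.exp 1 * Real.sqrt m * Real.exp ((m:ℝ) * (Real.log m - 1)) := h1
    _ ≤ Real.exp 1 * (Real.sqrt κ * Real.sqrt L) *
          Real.exp (-(ω*L) + (m:ℝ) * Real.log L + β * (1 - Real.log κ)) := by
        apply mul_le_mul (mul_le_mul_of_nonneg_left h4 (le_of_lt (Real.exp_pos 1)))
          _ (le_of_lt (Real.exp_pos _)) (by positivity)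
        rw [← h3]
        exact Real.exp_le_exp.mpr h2
    _ = (Real.exp 1 * Real.sqrt κ * Real.exp (β * (1 - Real.log κ))) *
          (Real.exp (-(ω*L)) * L ^ m * Real.sqrt L) := by
        rw [Real.exp_add, Real.exp_add, hexpL]; ring
    _ ≤ (Real.sqrt (2*Real.pi/κ) * Real.exp (13/12)) *
          (Real.exp (-(ω*L)) * L ^ m * Real.sqrt L) :=
        mul_le_mul_of_nonneg_right h5 (by positivity)
    _ = _ := by ring

/-- For `0 < ω < 1`, `κ̄ ∈ (1,e)` the solution of `κ(1−log κ) = ω`,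
every real `x ≥ e`, `m̄ = ⌊κ̄·log x⌋`, `ᾱ = κ̄·log x − m̄`, `n = ⌊log x⌋`,
`C_{κ̄} = √(2π/κ̄)·e^(13/12)`, and `α ∈ {ᾱ, 1}`, one has
`0 ≤ li_{ω̄,α}(x) − li_*(x) ≤ (C_{κ̄}·x^(1−ω)/√(log x))·(1 + Σ_{k=1}^{m̄−n} (log x)^k·Π_{i=0}^{k−1} 1/(m̄−i))`. -/
theorem liApprox_upper_sub_liStar_le_sum (ω κ : ℝ) (hω0 : 0 < ω) (hω1 : ω < 1)
    (hκ1 : 1 < κ) (hκe : κ < Real.exp 1) (hsol : κ * (1 - Real.log κ) = ω)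
    (x : ℝ) (hx : Real.exp 1 ≤ x) (α : ℝ)
    (hα : α = κ * Real.log x - ⌊κ * Real.log x⌋₊ ∨ α = 1) :
    0 ≤ liApprox κ α x - liStar x ∧
      liApprox κ α x - liStar x ≤
        Real.sqrt (2 * Real.pi / κ) * Real.exp (13 / 12) * x ^ (1 - ω)
            / Real.sqrt (Real.log x) *
          (1 + ∑ k ∈ Finset.Icc 1 (⌊κ * Real.log x⌋₊ - ⌊Real.log x⌋₊),
            Real.log x ^ k *
              ∏ i ∈ Finset.range k, 1 / ((⌊κ * Real.log x⌋₊ : ℝ) - (i : ℝ))) := by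
  have hxpos : 0 < x := lt_of_lt_of_le (Real.exp_pos 1) hx
  set L := Real.log x with hLdef
  have hL1 : 1 ≤ L := by
    rw [hLdef, ← Real.log_exp 1]
    exact Real.log_le_log (Real.exp_pos 1) hx
  have hLpos : (0:ℝ) < L := lt_of_lt_of_le one_pos hL1
  have hκpos : (0:ℝ) < κ := lt_trans one_pos hκ1
  have hLκ : L ≤ κ * L := by nlinarith
  set n := ⌊L⌋₊ with hndef
  set m := ⌊κ * L⌋₊ with hmdef
  have hnm : n ≤ m := Nat.floor_le_floor hLκ
  have hn1 : 1 ≤ n := Nat.le_floor (by exact_mod_cast hL1)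
  have hm1 : 1 ≤ m := le_trans hn1 hnm
  have hnL : (n:ℝ) ≤ L := Nat.floor_le (le_of_lt hLpos)
  have hLn1 : L < (n:ℝ) + 1 := Nat.lt_floor_add_one _
  have hmle : (m:ℝ) ≤ κ * L := Nat.floor_le (by positivity)
  have hmlt : κ * L < (m:ℝ) + 1 := Nat.lt_floor_add_one _
  have hα0 : 0 ≤ α := by
    rcases hα with h | h
    · rw [h]; linarith
    · rw [h]; norm_num
  have hα1 : α ≤ 1 := by
    rcases hα with h | h
    · rw [h]; linarith
    · rw [h]
  have hL0 : L ≠ 0 := ne_of_gt hLpos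
  -- the difference formula
  have hs : ∑ k ∈ Finset.range m, (Nat.factorial k : ℝ) / L ^ k
      = ∑ k ∈ Finset.range n, (Nat.factorial k : ℝ) / L ^ k
        + ∑ k ∈ Finset.Ico n m, (Nat.factorial k : ℝ) / L ^ k :=
    (Finset.sum_range_add_sum_Ico _ hnm).symm
  have hdiff : liApprox κ α x - liStar x
      = x / L * (α * (Nat.factorial m : ℝ) / L ^ m
          + (∑ k ∈ Finset.Ico n m, (Nat.factorial k : ℝ) / L ^ k)
          - (L - (n:ℝ)) * ((Nat.factorial n : ℝ) / L ^ n)) := by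
    simp only [liApprox, liStar, ← hLdef, ← hmdef, ← hndef]
    rw [hs, pow_succ]
    field_simp
    ring
  have hFn0 : (0:ℝ) ≤ (Nat.factorial n : ℝ) / L ^ n := by positivity
  have hFm0 : (0:ℝ) ≤ (Nat.factorial m : ℝ) / L ^ m := by positivity
  -- lower bound
  have hlow : 0 ≤ liApprox κ α x - liStar x := by
    rw [hdiff]
    apply mul_nonneg (by positivity)
    rcases eq_or_lt_of_le hnm with heq | hlt
    · have hcast : (m:ℝ) = (n:ℝ) := by exact_mod_cast heq.symm
      rw [← heq, Finset.Ico_self, Finset.sum_empty]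
      have hαγ : L - (n:ℝ) ≤ α := by
        rcases hα with h | h
        · rw [h, hcast]; linarith
        · rw [h]; linarith
      have h9 : α * (Nat.factorial n : ℝ) / L ^ n = α * ((Nat.factorial n : ℝ) / L ^ n) :=
        mul_div_assoc _ _ _
      have h10 := mul_le_mul_of_nonneg_right hαγ hFn0
      rw [h9]
      linarith
    · have hsum1 : (Nat.factorial n : ℝ) / L ^ n
          ≤ ∑ k ∈ Finset.Ico n m, (Nat.factorial k : ℝ) / L ^ k := by
        apply Finset.single_le_sum (f := fun k => (Nat.factorial k : ℝ) / L ^ k)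
        · intro i _; positivity
        · exact Finset.mem_Ico.mpr ⟨le_refl n, hlt⟩
      have h9 : α * (Nat.factorial m : ℝ) / L ^ m = α * ((Nat.factorial m : ℝ) / L ^ m) :=
        mul_div_assoc _ _ _
      have h10 := mul_le_mul_of_nonneg_right (by linarith : L - (n:ℝ) ≤ 1) hFn0
      have h11 := mul_nonneg hα0 hFm0
      rw [h9]
      linarith
  refine ⟨hlow, ?_⟩
  -- upper bound
  set N := m - n with hNdef
  have hNm : N ≤ m := Nat.sub_le _ _
  -- step 1 : bound by full sum
  have hup1 : liApprox κ α x - liStar x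
      ≤ x / L * ∑ k ∈ Finset.Ico n (m+1), (Nat.factorial k : ℝ) / L ^ k := by
    rw [hdiff, Finset.sum_Ico_succ_top hnm]
    apply mul_le_mul_of_nonneg_left _ (by positivity : (0:ℝ) ≤ x / L)
    have h9 : α * (Nat.factorial m : ℝ) / L ^ m = α * ((Nat.factorial m : ℝ) / L ^ m) :=
      mul_div_assoc _ _ _
    have h10 := mul_le_mul_of_nonneg_right hα1 hFm0
    have h11 := mul_nonneg (by linarith : (0:ℝ) ≤ L - (n:ℝ)) hFn0
    rw [h9]
    linarith
  -- step 2 : rewrite the full sum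
  have e1 : ∑ k ∈ Finset.Ico n (m+1), (Nat.factorial k : ℝ) / L ^ k
      = ∑ j ∈ Finset.range (N+1), (Nat.factorial (n+j) : ℝ) / L ^ (n+j) := by
    rw [Finset.sum_Ico_eq_sum_range]
    apply Finset.sum_congr (by congr 1; omega) (fun j _ => rfl)
  have e2 : ∑ j ∈ Finset.range (N+1), (Nat.factorial (n+j) : ℝ) / L ^ (n+j)
      = ∑ j ∈ Finset.range (N+1), (Nat.factorial (m-j) : ℝ) / L ^ (m-j) := by
    rw [← Finset.sum_range_reflect]
    apply Finset.sum_congr rfl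
    intro j hj
    rw [Finset.mem_range] at hj
    have harg : n + (N + 1 - 1 - j) = m - j := by omega
    rw [harg]
  have e3 : ∀ j ∈ Finset.range (N+1), (Nat.factorial (m-j) : ℝ) / L ^ (m-j)
      = (Nat.factorial m : ℝ) / L ^ m *
          (L ^ j * ∏ i ∈ Finset.range j, 1 / ((m:ℝ) - (i:ℝ))) := by
    intro j hj
    rw [Finset.mem_range] at hj
    have hjm : j ≤ m := by omega
    have hprod : ∏ i ∈ Finset.range j, (1:ℝ) / ((m:ℝ) - (i:ℝ))
        = ((m-j).factorial : ℝ) / (m.factorial : ℝ) := by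
      simp only [one_div]
      rw [Finset.prod_inv_distrib, aux_prod m j hjm, inv_div]
    rw [hprod]
    have hLm : L ^ m = L ^ (m-j) * L ^ j := by rw [← pow_add]; congr 1; omega
    have hfacpos : (0:ℝ) < (m.factorial : ℝ) := by positivity
    rw [hLm]
    field_simp
  have e4 : ∑ k ∈ Finset.Ico n (m+1), (Nat.factorial k : ℝ) / L ^ k
      = (Nat.factorial m : ℝ) / L ^ m *
          ∑ j ∈ Finset.range (N+1), (L ^ j * ∏ i ∈ Finset.range j, 1 / ((m:ℝ) - (i:ℝ))) := by
    rw [e1, e2, Finset.mul_sum]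
    exact Finset.sum_congr rfl e3
  have e5 : ∑ j ∈ Finset.range (N+1), (L ^ j * ∏ i ∈ Finset.range j, 1 / ((m:ℝ) - (i:ℝ)))
      = 1 + ∑ k ∈ Finset.Icc 1 N, L ^ k * ∏ i ∈ Finset.range k, 1 / ((m:ℝ) - (i:ℝ)) := by
    rw [Finset.sum_range_succ']
    simp only [pow_zero, Finset.range_zero, Finset.prod_empty, mul_one, one_mul]
    rw [show Finset.Icc 1 N = Finset.Ico 1 (N+1) from (Finset.Ico_add_one_right_eq_Icc 1 N).symm,
      Finset.sum_Ico_eq_sum_range]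
    simp only [Nat.add_sub_cancel]
    rw [add_comm]
    congr 1
    exact Finset.sum_congr rfl (fun j _ => by rw [add_comm 1 j])
  -- positivity of S
  have hS0 : (0:ℝ) ≤ 1 + ∑ k ∈ Finset.Icc 1 N, L ^ k *
      ∏ i ∈ Finset.range k, 1 / ((m:ℝ) - (i:ℝ)) := by
    apply add_nonneg zero_le_one
    apply Finset.sum_nonneg
    intro k hk
    rw [Finset.mem_Icc] at hk
    apply mul_nonneg (pow_nonneg hLpos.le _)
    apply Finset.prod_nonneg
    intro i hi
    rw [Finset.mem_range] at hi
    have him : (i:ℝ) ≤ (m:ℝ) := by exact_mod_cast (by omega : i ≤ m)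
    apply div_nonneg zero_le_one
    linarith
  -- the key analytic bound
  have hkey := aux_key ω κ L hκ1 hκe.le hsol hL1 aux_factorial aux_exp1112
  rw [← hmdef] at hkey
  have hsqL : Real.sqrt L * Real.sqrt L = L := Real.mul_self_sqrt hLpos.le
  have hsqLpos : 0 < Real.sqrt L := Real.sqrt_pos.mpr hLpos
  have hxrw : x ^ (1-ω) = x * Real.exp (-(ω*L)) := by
    rw [Real.rpow_def_of_pos hxpos, ← hLdef,
      show L * (1-ω) = L + (-(ω*L)) by ring, Real.exp_add, Real.exp_log hxpos]
  have hA : x / L * ((Nat.factorial m : ℝ) / L ^ m)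
      ≤ Real.sqrt (2*Real.pi/κ) * Real.exp (13/12) * x ^ (1-ω) / Real.sqrt L := by
    rw [hxrw, div_mul_div_comm, div_le_div_iff₀ (by positivity) hsqLpos]
    have h1 : x * (Nat.factorial m : ℝ) * Real.sqrt L
        ≤ x * (Real.sqrt (2*Real.pi/κ) * Real.exp (13/12) * Real.exp (-(ω*L)) * L ^ m *
            Real.sqrt L) * Real.sqrt L := by
      apply mul_le_mul_of_nonneg_right (mul_le_mul_of_nonneg_left hkey hxpos.le) hsqLpos.le
    calc x * (Nat.factorial m : ℝ) * Real.sqrt L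
        ≤ x * (Real.sqrt (2*Real.pi/κ) * Real.exp (13/12) * Real.exp (-(ω*L)) * L ^ m *
            Real.sqrt L) * Real.sqrt L := h1
      _ = Real.sqrt (2*Real.pi/κ) * Real.exp (13/12) * (x * Real.exp (-(ω*L))) * (L * L ^ m) := by
          linear_combination (Real.sqrt (2*Real.pi/κ) * Real.exp (13/12) * Real.exp (-(ω*L)) *
            L ^ m * x) * hsqL
  -- conclude
  calc liApprox κ α x - liStar x
      ≤ x / L * ∑ k ∈ Finset.Ico n (m+1), (Nat.factorial k : ℝ) / L ^ k := hup1
    _ = x / L * ((Nat.factorial m : ℝ) / L ^ m) *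
          (1 + ∑ k ∈ Finset.Icc 1 N, L ^ k * ∏ i ∈ Finset.range k, 1 / ((m:ℝ) - (i:ℝ))) := by
        rw [e4, e5]; ring
    _ ≤ Real.sqrt (2*Real.pi/κ) * Real.exp (13/12) * x ^ (1-ω) / Real.sqrt L *
          (1 + ∑ k ∈ Finset.Icc 1 N, L ^ k * ∏ i ∈ Finset.range k, 1 / ((m:ℝ) - (i:ℝ))) :=
        mul_le_mul_of_nonneg_right hA hS0
end

section
/- Let κ̲ ∈ (0,1) be the solution of κ(1 − log κ) = 1/2 in (0,1). For every real x ≥ e, one has li_*(x) − li̲(x) ≤ li_*(x) − li_0(x) ≤ D̲ · √(x/log x), where D̲ = √(8π/κ̲)·e^(13/12)·(1 + κ̲)/(1 − κ̲). -/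
open Real Finset Filter Topology
open scoped Nat

lemma exp_natCast_le_d9_pow (n : ℕ) : exp n ≤ 2.7182818286 ^ n := by
  rw [← exp_one_pow]
  exact pow_le_pow_left₀ (exp_pos 1).le exp_one_lt_d9.le n

/-- The right side is the tangent line at `s` of the concave function `t ↦ t (1 - log t)`. -/
lemma mul_one_sub_log_le {t s : ℝ} (ht : 0 < t) (hs : 0 < s) :
    t * (1 - log t) ≤ s - t * log s := by
  have h := mul_le_mul_of_nonneg_left (log_le_sub_one_of_pos (div_pos hs ht)) ht.le
  rw [log_div hs.ne' ht.ne', mul_sub_one, mul_div_cancel₀ _ ht.ne'] at h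
  linarith

lemma one_sixth_lt_of_mul_one_sub_log_eq {κ : ℝ} (hκ0 : 0 < κ)
    (hsol : κ * (1 - log κ) = 1 / 2) : 1 / 6 < κ := by
  by_contra! hκ
  have hlog6 : log 6 < 2 := by
    rw [log_lt_iff_lt_exp (by norm_num), show (2 : ℝ) = 1 + 1 by norm_num, exp_add]
    nlinarith [exp_one_gt_d9]
  have hlog6_pos : 0 < log 6 := log_pos (by norm_num)
  have h := mul_one_sub_log_le hκ0 (by norm_num : (0 : ℝ) < 1 / 6)
  rw [one_div, log_inv] at h
  nlinarith

lemma lt_one_fifth_of_mul_one_sub_log_eq {κ : ℝ} (hκ0 : 0 < κ) (hκ1 : κ < 1)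
    (hsol : κ * (1 - log κ) = 1 / 2) : κ < 1 / 5 := by
  by_contra! hκ
  have hlog5 : 3 / 2 < log 5 := by
    rw [lt_log_iff_exp_lt (by norm_num)]
    refine lt_of_pow_lt_pow_left₀ 2 (by norm_num) ?_
    rw [← exp_nat_mul]
    calc exp ((2 : ℕ) * (3 / 2 : ℝ)) = exp (3 : ℕ) := by norm_num
      _ ≤ 2.7182818286 ^ 3 := exp_natCast_le_d9_pow 3
      _ < 5 ^ 2 := by norm_num
  have hlogκ : log κ < 0 := log_neg hκ0 hκ1
  have h := mul_one_sub_log_le (by norm_num : (0 : ℝ) < 1 / 5) hκ0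
  rw [one_div, log_inv] at h
  nlinarith

lemma prod_range_add_one_le_pow {c : ℝ} (hc : 0 ≤ c) (i : ℕ) :
    ∏ j ∈ range i, (c + j + 1) ≤ (c + (i + 1) / 2) ^ i := by
  set a := c + ((i : ℝ) + 1) / 2 with ha
  -- pair the factor `j` with the factor `i - 1 - j`; each pair has arithmetic mean `a`
  have hpair : ∀ j ∈ range i, (c + j + 1) * (c + ↑(i - 1 - j) + 1) ≤ a ^ 2 := by
    intro j hj
    have hj' : ((i - 1 - j : ℕ) : ℝ) = i - 1 - j := by
      rw [mem_range] at hj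
      rw [Nat.cast_sub (by omega), Nat.cast_sub (by omega)]
      simp
    rw [hj', ha]
    nlinarith [sq_nonneg ((j : ℝ) - (i - 1 - j))]
  refine le_of_pow_le_pow_left₀ two_ne_zero (by positivity) ?_
  calc (∏ j ∈ range i, (c + j + 1)) ^ 2
      = ∏ j ∈ range i, ((c + j + 1) * (c + ↑(i - 1 - j) + 1)) := by
        rw [prod_mul_distrib, prod_range_reflect (fun j : ℕ ↦ c + j + 1), sq]
    _ ≤ ∏ _j ∈ range i, a ^ 2 :=
        prod_le_prod (fun j _ ↦ by positivity) hpair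
    _ = (a ^ i) ^ 2 := by rw [prod_const, card_range, ← pow_mul, mul_comm, pow_mul]

theorem Stirling.factorial_le_stirling_mul_exp {n : ℕ} (hn : n ≠ 0) :
    (n ! : ℝ) ≤ √(2 * π * n) * (n / exp 1) ^ n * exp (1 / (12 * n)) := by
  -- Robbins' bound makes `log (stirlingSeq k) - 1 / (12 k)` increase to `log √π`.
  set a : ℕ → ℝ := fun k ↦ log (stirlingSeq (k + 1)) - 1 / 12 * (1 / ((k : ℝ) + 1))
  have ha_mono : Monotone a := by
    refine monotone_nat_of_le_succ fun k ↦ ?_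
    have h := log_stirlingSeq_sdiff_le (k + 1)
    have hk : (1 : ℝ) / 12 * (1 / ((k : ℝ) + 1)) - 1 / 12 * (1 / (((k + 1 : ℕ) : ℝ) + 1))
        = 1 / (12 * (k + 1 : ℕ) * ((k + 1 : ℕ) + 1)) := by
      push_cast; field_simp; ring
    simp only [a]
    linarith
  have ha_lim : Tendsto a atTop (𝓝 (log √π - 1 / 12 * 0)) :=
    ((tendsto_stirlingSeq_sqrt_pi.comp (tendsto_add_atTop_nat 1)).log (by positivity)).sub
      (tendsto_one_div_add_atTop_nhds_zero_nat.const_mul _)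
  obtain ⟨k, rfl⟩ : ∃ k, n = k + 1 := ⟨n - 1, by omega⟩
  have hs : stirlingSeq (k + 1) ≤ √π * exp (1 / (12 * (k + 1 : ℕ))) := by
    have hk := ha_mono.ge_of_tendsto ha_lim k
    rw [← exp_log (sqrt_pos.2 pi_pos), ← exp_add, ← log_le_iff_le_exp (stirlingSeq'_pos k)]
    simp only [a] at hk
    have : (1 : ℝ) / (12 * (k + 1 : ℕ)) = 1 / 12 * (1 / ((k : ℝ) + 1)) := by
      push_cast; field_simp
    linarith
  set d : ℝ := √(2 * (k + 1 : ℕ)) * ((k + 1 : ℕ) / exp 1) ^ (k + 1) with hd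
  have hd0 : 0 < d := by positivity
  calc ((k + 1)! : ℝ) = stirlingSeq (k + 1) * d := (div_mul_cancel₀ _ hd0.ne').symm
    _ ≤ √π * exp (1 / (12 * (k + 1 : ℕ))) * d := mul_le_mul_of_nonneg_right hs hd0.le
    _ = _ := by
        rw [hd, show (2 : ℝ) * π * (k + 1 : ℕ) = π * (2 * (k + 1 : ℕ)) by ring,
          sqrt_mul pi_pos.le]
        ring

noncomputable def stieltjesTerm (L : ℝ) (k : ℕ) : ℝ := k ! / L ^ k

namespace stieltjesTerm

variable {L : ℝ}

lemma nonneg (hL : 0 ≤ L) (k : ℕ) : 0 ≤ stieltjesTerm L k := by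
  unfold stieltjesTerm; positivity

lemma zero : stieltjesTerm L 0 = 1 := by simp [stieltjesTerm]

lemma add_eq_mul_prod (m i : ℕ) :
    stieltjesTerm L (m + i) = stieltjesTerm L m * ∏ j ∈ range i, ((m + j + 1) / L) := by
  unfold stieltjesTerm
  rw [← Nat.factorial_mul_ascFactorial, Nat.ascFactorial_eq_prod_range, prod_div_distrib,
    prod_const, card_range, div_mul_div_comm, pow_add]
  push_cast
  congr 2
  exact prod_congr rfl fun j _ ↦ by ring

lemma antitoneOn (hL : 0 < L) : AntitoneOn (stieltjesTerm L) {k | (k : ℝ) ≤ L} := by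
  intro j _ k (hk : (k : ℝ) ≤ L) hjk
  obtain ⟨i, rfl⟩ := Nat.exists_eq_add_of_le hjk
  rw [add_eq_mul_prod]
  refine mul_le_of_le_one_right (nonneg hL.le j) (prod_le_one (fun _ _ ↦ by positivity) ?_)
  intro l hl
  rw [mem_range] at hl
  rw [div_le_one hL]
  push_cast at hk
  have : (l : ℝ) + 1 ≤ i := by exact_mod_cast hl
  linarith

lemma add_le_mul_pow (hL : 0 < L) (m i : ℕ) :
    stieltjesTerm L (m + i) ≤ stieltjesTerm L m * ((m + (i + 1) / 2) / L) ^ i := by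
  rw [add_eq_mul_prod, prod_div_distrib, prod_const, card_range, div_pow]
  exact mul_le_mul_of_nonneg_left
    (div_le_div_of_nonneg_right (prod_range_add_one_le_pow m.cast_nonneg i) (by positivity))
    (nonneg hL.le m)

lemma sum_Ico_one_le_one (hL : 0 < L) {n : ℕ} (hn : (n : ℝ) ≤ L) :
    ∑ k ∈ Ico 1 (n + 1), stieltjesTerm L k ≤ 1 := by
  have hterm : ∀ k ∈ Ico 1 (n + 1), stieltjesTerm L k ≤ 1 / L := by
    intro k hk
    rw [mem_Ico] at hk
    have hkL : (k : ℝ) ≤ L := (Nat.cast_le.2 (Nat.lt_succ_iff.mp hk.2)).trans hn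
    have h1L : ((1 : ℕ) : ℝ) ≤ L := (Nat.cast_le.2 hk.1).trans hkL
    simpa [stieltjesTerm] using antitoneOn hL h1L hkL hk.1
  calc ∑ k ∈ Ico 1 (n + 1), stieltjesTerm L k ≤ #(Ico 1 (n + 1)) • (1 / L) :=
        sum_le_card_nsmul _ _ _ hterm
    _ = n / L := by simp [div_eq_mul_inv]
    _ ≤ 1 := (div_le_one hL).2 hn

lemma sum_Ico_le_two (hL : 0 < L) (m : ℕ) {n : ℕ} (hn : (n : ℝ) ≤ L) :
    ∑ k ∈ Ico m (n + 1), stieltjesTerm L k ≤ 2 := by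
  calc ∑ k ∈ Ico m (n + 1), stieltjesTerm L k ≤ ∑ k ∈ Ico 0 (n + 1), stieltjesTerm L k :=
        sum_le_sum_of_subset_of_nonneg (Ico_subset_Ico_left m.zero_le)
          fun k _ _ ↦ nonneg hL.le k
    _ = stieltjesTerm L 0 + ∑ k ∈ Ico 1 (n + 1), stieltjesTerm L k :=
        sum_eq_sum_Ico_succ_bot n.succ_pos _
    _ ≤ 2 := by rw [zero]; linarith [sum_Ico_one_le_one hL hn]

lemma sum_Ico_le_div_one_sub (hL : 0 < L) (m n : ℕ) (hρ : ((m : ℝ) + n + 1) / (2 * L) < 1) :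
    ∑ k ∈ Ico m (n + 1), stieltjesTerm L k
      ≤ stieltjesTerm L m / (1 - ((m : ℝ) + n + 1) / (2 * L)) := by
  set ρ := ((m : ℝ) + n + 1) / (2 * L)
  have hρ0 : 0 ≤ ρ := by positivity
  have hterm : ∀ i ∈ range (n + 1 - m),
      stieltjesTerm L (m + i) ≤ stieltjesTerm L m * ρ ^ i := by
    intro i hi
    rw [mem_range] at hi
    have hmi : (m : ℝ) + i ≤ n := by exact_mod_cast (by omega : m + i ≤ n)
    refine (add_le_mul_pow hL m i).trans (mul_le_mul_of_nonneg_left ?_ (nonneg hL.le m))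
    refine pow_le_pow_left₀ (by positivity) ?_ i
    rw [div_le_div_iff₀ hL (by positivity)]
    nlinarith
  calc ∑ k ∈ Ico m (n + 1), stieltjesTerm L k
      = ∑ i ∈ range (n + 1 - m), stieltjesTerm L (m + i) := sum_Ico_eq_sum_range _ _ _
    _ ≤ ∑ i ∈ range (n + 1 - m), stieltjesTerm L m * ρ ^ i := sum_le_sum hterm
    _ = stieltjesTerm L m * ∑ i ∈ Ico 0 (n + 1 - m), ρ ^ i := by rw [mul_sum, range_eq_Ico]
    _ ≤ stieltjesTerm L m * (ρ ^ 0 / (1 - ρ)) :=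
        mul_le_mul_of_nonneg_left (geom_sum_Ico_le_of_lt_one hρ0 hρ) (nonneg hL.le m)
    _ = stieltjesTerm L m / (1 - ρ) := by rw [pow_zero, mul_one_div]

end stieltjesTerm

lemma pow_floor_div_le {κ L : ℝ} (hκ0 : 0 < κ) (hκ1 : κ < 1)
    (hsol : κ * (1 - log κ) = 1 / 2) (hL : 0 < L) :
    ((⌊κ * L⌋₊ : ℝ) / (exp 1 * L)) ^ ⌊κ * L⌋₊ ≤ exp 1 / κ * exp (-(L / 2)) := by
  set m := ⌊κ * L⌋₊
  have hm : (m : ℝ) ≤ κ * L := Nat.floor_le (by positivity)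
  have hm' : κ * L - 1 ≤ m := by linarith [Nat.lt_floor_add_one (κ * L)]
  have hb0 : 0 < κ / exp 1 := by positivity
  have hb1 : κ / exp 1 ≤ 1 := by
    rw [div_le_one (exp_pos 1)]; linarith [add_one_le_exp (1 : ℝ)]
  calc ((m : ℝ) / (exp 1 * L)) ^ m ≤ (κ / exp 1) ^ m := by
        refine pow_le_pow_left₀ (by positivity) ?_ m
        rw [div_le_div_iff₀ (by positivity) (exp_pos 1)]
        nlinarith [exp_pos 1]
    _ = (κ / exp 1) ^ (m : ℝ) := (rpow_natCast _ _).symm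
    _ ≤ (κ / exp 1) ^ (κ * L - 1) := rpow_le_rpow_of_exponent_ge hb0 hb1 hm'
    _ = exp 1 / κ * exp (-(L / 2)) := by
        -- `(κ / e) ^ (κ L) = e ^ (-L / 2)` is the defining equation of `κ`
        have hexp : log (κ / exp 1) * (κ * L - 1) = -(L / 2) + (1 - log κ) := by
          rw [log_div hκ0.ne' (exp_pos 1).ne', log_exp]
          linear_combination (-L) * hsol
        rw [rpow_def_of_pos hb0, hexp, exp_add, exp_sub, exp_log hκ0]
        ring

lemma stieltjesTerm_floor_le {κ L : ℝ} (hκ0 : 0 < κ) (hκ1 : κ < 1)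
    (hsol : κ * (1 - log κ) = 1 / 2) (hL : 0 < L) (hm : 1 ≤ ⌊κ * L⌋₊) :
    stieltjesTerm L ⌊κ * L⌋₊
      ≤ √(2 * π / κ) * exp (13 / 12) * (√L * exp (-(L / 2))) := by
  set m := ⌊κ * L⌋₊
  have hmR : (1 : ℝ) ≤ m := by exact_mod_cast hm
  have hsqrt : √(2 * π * m) ≤ √(2 * π * (κ * L)) :=
    sqrt_le_sqrt (by gcongr; exact Nat.floor_le (by positivity))
  have hexp : exp (1 / (12 * m)) ≤ exp (1 / 12) :=
    exp_le_exp.2 (by gcongr; linarith)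
  calc stieltjesTerm L m ≤ √(2 * π * m) * (m / exp 1) ^ m * exp (1 / (12 * m)) / L ^ m :=
        div_le_div_of_nonneg_right
          (Stirling.factorial_le_stirling_mul_exp (by omega)) (by positivity)
    _ = √(2 * π * m) * exp (1 / (12 * m)) * ((m : ℝ) / (exp 1 * L)) ^ m := by
        rw [div_pow, div_pow, mul_pow]; ring
    _ ≤ √(2 * π * (κ * L)) * exp (1 / 12) * (exp 1 / κ * exp (-(L / 2))) := by
        gcongr
        exact pow_floor_div_le hκ0 hκ1 hsol hL
    _ = √(2 * π / κ) * exp (13 / 12) * (√L * exp (-(L / 2))) := by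
        rw [show 2 * π * (κ * L) = 2 * π / κ * L * κ ^ 2 by field_simp,
          sqrt_mul (by positivity), sqrt_mul (by positivity), sqrt_sq hκ0.le,
          show (13 / 12 : ℝ) = 1 / 12 + 1 by norm_num, exp_add]
        field_simp

noncomputable def liErrorConst (κ : ℝ) : ℝ :=
  √(8 * π / κ) * exp (13 / 12) * (1 + κ) / (1 - κ)

lemma forty_two_le_liErrorConst {κ : ℝ} (hκ6 : 1 / 6 < κ) (hκ5 : κ < 1 / 5) :
    42 ≤ liErrorConst κ := by
  have hsqrt : 11.2 ≤ √(8 * π / κ) := by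
    rw [le_sqrt (by norm_num) (by positivity), le_div_iff₀ (by linarith)]
    nlinarith [pi_gt_d2]
  have hexp : 2.718 ≤ exp (13 / 12) :=
    (exp_one_gt_d9.le.trans' (by norm_num)).trans (exp_le_exp.2 (by norm_num))
  have hfrac : 7 / 5 ≤ (1 + κ) / (1 - κ) := by
    rw [le_div_iff₀ (by linarith)]; linarith
  calc (42 : ℝ) ≤ 11.2 * 2.718 * (7 / 5) := by norm_num
    _ ≤ √(8 * π / κ) * exp (13 / 12) * ((1 + κ) / (1 - κ)) := by gcongr
    _ = liErrorConst κ := by rw [liErrorConst]; ring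

lemma le_mul_sqrt_mul_exp_neg_half {B D L : ℝ} (hD : 0 ≤ D) (hL : 0 ≤ L)
    (h : B ^ 2 * exp L ≤ D ^ 2 * L) : B ≤ D * (√L * exp (-(L / 2))) := by
  refine le_of_pow_le_pow_left₀ two_ne_zero (by positivity) ?_
  rw [mul_pow, mul_pow, sq_sqrt hL, ← exp_nat_mul,
    show ((2 : ℕ) : ℝ) * -(L / 2) = -L by push_cast; ring, exp_neg, ← mul_assoc,
    le_mul_inv_iff₀ (exp_pos L)]
  exact h

lemma sum_stieltjesTerm_le_of_nine_le {κ L : ℝ} (hκ6 : 1 / 6 < κ) (hκ5 : κ < 1 / 5)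
    (hsol : κ * (1 - log κ) = 1 / 2) (hL : 9 ≤ L) :
    ∑ k ∈ Ico ⌊κ * L⌋₊ (⌊L⌋₊ + 1), stieltjesTerm L k
      ≤ liErrorConst κ * (√L * exp (-(L / 2))) := by
  set m := ⌊κ * L⌋₊
  set n := ⌊L⌋₊
  have hL0 : 0 < L := by linarith
  have hm : (m : ℝ) ≤ κ * L := Nat.floor_le (by positivity)
  have hn : (n : ℝ) ≤ L := Nat.floor_le hL0.le
  have hm1 : 1 ≤ m := Nat.le_floor (by push_cast; nlinarith)
  -- this is `κ (1 - κ) L ≥ 1 + κ`, which is where `L ≥ 9` is needed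
  have hgap : (1 - κ) / (2 * (1 + κ)) ≤ 1 - ((m : ℝ) + n + 1) / (2 * L) := by
    rw [div_le_iff₀ (by linarith), sub_mul, div_mul_eq_mul_div, le_sub_iff_add_le,
      ← le_sub_iff_add_le', div_le_iff₀ (by linarith)]
    nlinarith
  have hgap0 : 0 < (1 - κ) / (2 * (1 + κ)) := div_pos (by linarith) (by linarith)
  calc ∑ k ∈ Ico m (n + 1), stieltjesTerm L k
      ≤ stieltjesTerm L m / (1 - ((m : ℝ) + n + 1) / (2 * L)) :=
        stieltjesTerm.sum_Ico_le_div_one_sub hL0 m n (by linarith)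
    _ ≤ stieltjesTerm L m / ((1 - κ) / (2 * (1 + κ))) :=
        div_le_div_of_nonneg_left (stieltjesTerm.nonneg hL0.le m) hgap0 hgap
    _ ≤ √(2 * π / κ) * exp (13 / 12) * (√L * exp (-(L / 2)))
          / ((1 - κ) / (2 * (1 + κ))) :=
        div_le_div_of_nonneg_right
          (stieltjesTerm_floor_le (by linarith) (by linarith) hsol hL0 hm1) hgap0.le
    _ = liErrorConst κ * (√L * exp (-(L / 2))) := by
        rw [liErrorConst, show 8 * π / κ = 2 ^ 2 * (2 * π / κ) by ring,
          sqrt_mul (by positivity), sqrt_sq (by norm_num)]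
        field_simp

lemma sum_stieltjesTerm_le {κ L : ℝ} (hκ0 : 0 < κ) (hκ1 : κ < 1)
    (hsol : κ * (1 - log κ) = 1 / 2) (hL : 1 ≤ L) :
    ∑ k ∈ Ico ⌊κ * L⌋₊ (⌊L⌋₊ + 1), stieltjesTerm L k
      ≤ liErrorConst κ * (√L * exp (-(L / 2))) := by
  have hκ6 := one_sixth_lt_of_mul_one_sub_log_eq hκ0 hsol
  have hκ5 := lt_one_fifth_of_mul_one_sub_log_eq hκ0 hκ1 hsol
  have hD := forty_two_le_liErrorConst hκ6 hκ5
  have hL0 : 0 < L := by linarith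
  have hn : (⌊L⌋₊ : ℝ) ≤ L := Nat.floor_le hL0.le
  have hS0 : 0 ≤ ∑ k ∈ Ico ⌊κ * L⌋₊ (⌊L⌋₊ + 1), stieltjesTerm L k :=
    sum_nonneg fun k _ ↦ stieltjesTerm.nonneg hL0.le k
  rcases lt_or_ge L 6 with hL6 | hL6
  · refine le_mul_sqrt_mul_exp_neg_half (by linarith) hL0.le ?_
    have hS := stieltjesTerm.sum_Ico_le_two hL0 ⌊κ * L⌋₊ hn
    calc (∑ k ∈ Ico ⌊κ * L⌋₊ (⌊L⌋₊ + 1), stieltjesTerm L k) ^ 2 * exp L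
        ≤ 2 ^ 2 * exp (6 : ℕ) := by gcongr; exact_mod_cast hL6.le
      _ ≤ 2 ^ 2 * 2.7182818286 ^ 6 := by gcongr; exact exp_natCast_le_d9_pow 6
      _ ≤ 42 ^ 2 * 1 := by norm_num
      _ ≤ liErrorConst κ ^ 2 * L := by gcongr
  rcases lt_or_ge L 9 with hL9 | hL9
  · refine le_mul_sqrt_mul_exp_neg_half (by linarith) hL0.le ?_
    have hm1 : 1 ≤ ⌊κ * L⌋₊ := Nat.le_floor (by push_cast; nlinarith)
    have hS : ∑ k ∈ Ico ⌊κ * L⌋₊ (⌊L⌋₊ + 1), stieltjesTerm L k ≤ 1 :=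
      (sum_le_sum_of_subset_of_nonneg (Ico_subset_Ico_left hm1)
        fun k _ _ ↦ stieltjesTerm.nonneg hL0.le k).trans
        (stieltjesTerm.sum_Ico_one_le_one hL0 hn)
    calc (∑ k ∈ Ico ⌊κ * L⌋₊ (⌊L⌋₊ + 1), stieltjesTerm L k) ^ 2 * exp L
        ≤ 1 ^ 2 * exp (9 : ℕ) := by gcongr; exact_mod_cast hL9.le
      _ ≤ 1 ^ 2 * 2.7182818286 ^ 9 := by gcongr; exact exp_natCast_le_d9_pow 9
      _ ≤ 42 ^ 2 * 6 := by norm_num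
      _ ≤ liErrorConst κ ^ 2 * L := by gcongr
  exact sum_stieltjesTerm_le_of_nine_le hκ6 hκ5 hsol hL9

lemma liApprox_zero_le {κ α x : ℝ} (hα : 0 ≤ α) (hx : 1 ≤ x) :
    liApprox κ 0 x ≤ liApprox κ α x := by
  have hL := log_nonneg hx
  unfold liApprox
  gcongr

lemma liStar_sub_liApprox_zero_le {κ x : ℝ} (hκ : κ ≤ 1) (hx : 1 < x) :
    liStar x - liApprox κ 0 x
      ≤ x / log x *
          ∑ k ∈ Ico ⌊κ * log x⌋₊ (⌊log x⌋₊ + 1), stieltjesTerm (log x) k := by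
  have hL : 0 < log x := log_pos hx
  have hmn : ⌊κ * log x⌋₊ ≤ ⌊log x⌋₊ :=
    Nat.floor_le_floor (mul_le_of_le_one_left hL.le hκ)
  have hn := Nat.lt_floor_add_one (log x)
  unfold liStar liApprox
  generalize log x = L at *
  generalize ⌊L⌋₊ = n at *
  generalize ⌊κ * L⌋₊ = m at *
  calc _ = x / L * (∑ k ∈ Ico m n, stieltjesTerm L k + (L - n) * stieltjesTerm L n) := by
        simp only [stieltjesTerm]
        rw [sum_Ico_eq_sub _ hmn, pow_succ]
        field_simp
        ring
    _ ≤ x / L * (∑ k ∈ Ico m n, stieltjesTerm L k + stieltjesTerm L n) := by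
        gcongr
        exact mul_le_of_le_one_left (stieltjesTerm.nonneg hL.le n) (by linarith)
    _ = _ := by rw [sum_Ico_succ_top hmn]

lemma div_log_mul_sqrt_log_mul_exp_neg_half {x : ℝ} (hx : 1 < x) :
    x / log x * (√(log x) * exp (-(log x / 2))) = √(x / log x) := by
  have hx0 : 0 < x := by linarith
  have hL : 0 < log x := log_pos hx
  rw [exp_neg, exp_half, exp_log hx0, sqrt_div hx0.le]
  field_simp
  rw [sq_sqrt hx0.le, sq_sqrt hL.le, mul_comm]

/-- With `κ̲ ∈ (0,1)` the solution of `κ(1−log κ) = 1/2`, for every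
real `x ≥ e`: `li_*(x) − li̲(x) ≤ li_*(x) − li₀(x) ≤ D̲·√(x/log x)` where
`li₀(x) = li_{κ̲,0}(x)`, `li̲(x) = li_{κ̲,α̲}(x)`, and
`D̲ = √(8π/κ̲)·e^(13/12)·(1+κ̲)/(1−κ̲)`. -/
theorem liStar_sub_li0_le (κ : ℝ) (hκ0 : 0 < κ) (hκ1 : κ < 1)
    (hsol : κ * (1 - Real.log κ) = 1 / 2) (x : ℝ) (hx : Real.exp 1 ≤ x) :
    liStar x - liApprox κ (κ * Real.log x - ⌊κ * Real.log x⌋₊) x ≤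
        liStar x - liApprox κ 0 x ∧
      liStar x - liApprox κ 0 x ≤
        Real.sqrt (8 * Real.pi / κ) * Real.exp (13 / 12) * (1 + κ) / (1 - κ)
          * Real.sqrt (x / Real.log x) := by
  have hx1 : 1 < x := (one_lt_exp_iff.2 one_pos).trans_le hx
  have hL : 1 ≤ log x := (le_log_iff_exp_le (by linarith)).2 hx
  refine ⟨sub_le_sub_left (liApprox_zero_le ?_ hx1.le) _, ?_⟩
  · linarith [Nat.floor_le (by positivity : 0 ≤ κ * log x)]
  calc liStar x - liApprox κ 0 x
      ≤ x / log x *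
          ∑ k ∈ Ico ⌊κ * log x⌋₊ (⌊log x⌋₊ + 1), stieltjesTerm (log x) k :=
        liStar_sub_liApprox_zero_le hκ1.le hx1
    _ ≤ x / log x * (liErrorConst κ * (√(log x) * exp (-(log x / 2)))) := by
        gcongr
        exact sum_stieltjesTerm_le hκ0 hκ1 hsol hL
    _ = liErrorConst κ * √(x / log x) := by
        rw [mul_left_comm, div_log_mul_sqrt_log_mul_exp_neg_half hx1]
end

section
/- Let X ≥ e be a real number. Suppose there exist I ∈ ℕ and natural numbers x_0, x_1, …, x_{I+1} with x_0 = 2 such that for each i = 0, …, I, x_{i+1} is the largest natural number n > x_i with li̲(n) ≤ π(x_i), and X ≤ x_{I+1}. Then li̲(x) ≤ π(x) for all real x with e ≤ x ≤ X. -/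
open Real Finset
open scoped Nat

noncomputable def liUnder (κ x : ℝ) : ℝ :=
  liApprox κ (κ * log x - ⌊κ * log x⌋₊) x

theorem self_le_mul_one_sub_log {κ : ℝ} (h0 : 0 ≤ κ) (h1 : κ ≤ 1) : κ ≤ κ * (1 - log κ) := by
  nlinarith [log_nonpos h0 h1]

theorem exists_le_and_le_succ {α : Type*} [LinearOrder α] {s : ℕ → α} {x : α} {I : ℕ}
    (h0 : s 0 ≤ x) (hI : x ≤ s (I + 1)) : ∃ i ≤ I, s i ≤ x ∧ x ≤ s (i + 1) := by
  induction I with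
  | zero => exact ⟨0, le_rfl, h0, hI⟩
  | succ I ih =>
    rcases le_or_gt x (s (I + 1)) with hx | hx
    · obtain ⟨i, hi, hix⟩ := ih hx
      exact ⟨i, hi.trans I.le_succ, hix⟩
    · exact ⟨I + 1, le_rfl, hx.le, hI⟩

/-- `u ↦ liUnder κ (exp u)` on the stretch where `⌊κ u⌋₊ = m`. -/
noncomputable def liPiece (κ : ℝ) (m : ℕ) (u : ℝ) : ℝ :=
  exp u * ((κ * u - m) * m ! / u ^ (m + 1) + ∑ k ∈ range m, (k ! : ℝ) / u ^ (k + 1))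

theorem liUnder_eq_liPiece (κ : ℝ) {x : ℝ} (hx : 0 < x) (hlog : log x ≠ 0) :
    liUnder κ x = liPiece κ ⌊κ * log x⌋₊ (log x) := by
  rw [liUnder, liApprox, liPiece, exp_log hx, mul_add, mul_add, mul_sum, mul_sum]
  congr 1
  · rw [pow_succ]
    field_simp
  · refine sum_congr rfl fun k _ => ?_
    rw [pow_succ]
    field_simp

theorem liPiece_succ_of_mul_eq {κ w : ℝ} {m : ℕ} (hw : κ * w = m + 1) :
    liPiece κ (m + 1) w = liPiece κ m w := by
  simp only [liPiece, sum_range_succ, hw, Nat.cast_add, Nat.cast_one]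
  ring

section Derivative

variable {u : ℝ}

theorem hasDerivAt_exp_mul_factorial_div_pow (k : ℕ) (hu : u ≠ 0) :
    HasDerivAt (fun u => exp u * ((k ! : ℝ) / u ^ (k + 1)))
      (exp u * ((k ! : ℝ) / u ^ (k + 1) - ((k + 1) ! : ℝ) / u ^ (k + 2))) u := by
  refine ((hasDerivAt_exp u).mul ((hasDerivAt_const u (k ! : ℝ)).fun_div
    (hasDerivAt_pow (k + 1) u) (pow_ne_zero _ hu))).congr_deriv ?_
  push_cast [Nat.factorial_succ]
  field_simp
  ring

/-- The sum telescopes. -/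
theorem hasDerivAt_exp_mul_sum_factorial_div_pow (m : ℕ) (hu : u ≠ 0) :
    HasDerivAt (fun u => exp u * ∑ k ∈ range m, (k ! : ℝ) / u ^ (k + 1))
      (exp u * (1 / u - (m ! : ℝ) / u ^ (m + 1))) u := by
  induction m with
  | zero => simpa using hasDerivAt_const u (0 : ℝ)
  | succ m ih =>
    simp only [sum_range_succ, mul_add]
    refine (ih.add (hasDerivAt_exp_mul_factorial_div_pow m hu)).congr_deriv ?_
    ring

theorem hasDerivAt_exp_mul_tail (κ : ℝ) (m : ℕ) (hu : u ≠ 0) :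
    HasDerivAt (fun u => exp u * ((κ * u - m) * m ! / u ^ (m + 1)))
      (exp u * (m ! * ((κ * u - m) * (u - (m + 1)) + κ * u) / u ^ (m + 2))) u := by
  have hlin : HasDerivAt (fun u => (κ * u - m) * (m ! : ℝ)) (κ * m !) u := by
    simpa using (((hasDerivAt_id u).const_mul κ).sub_const (m : ℝ)).mul_const (m ! : ℝ)
  refine ((hasDerivAt_exp u).mul (hlin.fun_div (hasDerivAt_pow (m + 1) u)
    (pow_ne_zero _ hu))).congr_deriv ?_
  push_cast
  field_simp
  ring

theorem hasDerivAt_liPiece (κ : ℝ) (m : ℕ) (hu : u ≠ 0) :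
    HasDerivAt (liPiece κ m)
      (exp u * ((u ^ (m + 1) - m ! * u + m ! * ((κ * u - m) * (u - (m + 1)) + κ * u))
        / u ^ (m + 2))) u := by
  have h : HasDerivAt (fun u => exp u * ((κ * u - m) * m ! / u ^ (m + 1))
      + exp u * ∑ k ∈ range m, (k ! : ℝ) / u ^ (k + 1)) _ u :=
    (hasDerivAt_exp_mul_tail κ m hu).add (hasDerivAt_exp_mul_sum_factorial_div_pow m hu)
  simp only [← mul_add] at h
  refine h.congr_deriv ?_
  field_simp
  ring

end Derivative

theorem factorial_le_pow_of_le {m : ℕ} {u : ℝ} (hm : (m : ℝ) ≤ u) : (m ! : ℝ) ≤ u ^ m :=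
  calc (m ! : ℝ) ≤ (m : ℝ) ^ m := by exact_mod_cast Nat.factorial_le_pow m
    _ ≤ u ^ m := pow_le_pow_left₀ m.cast_nonneg hm m

theorem liPiece_monotoneOn {κ : ℝ} (hκ : 0 < κ) (m : ℕ) :
    MonotoneOn (liPiece κ m) (Set.Ici (max ((m : ℝ) + 1) (m / κ))) := by
  have hpos : ∀ u ∈ Set.Ici (max ((m : ℝ) + 1) (m / κ)), 0 < u := fun u hu =>
    lt_of_lt_of_le (by positivity) ((le_max_left _ _).trans hu)
  refine monotoneOn_of_deriv_nonneg (convex_Ici _)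
    (fun u hu => (hasDerivAt_liPiece κ m (hpos u hu).ne').continuousAt.continuousWithinAt)
    (fun u hu => ?_) (fun u hu => ?_)
  all_goals
    rw [interior_Ici] at hu
    have hu0 := hpos u (Set.mem_Ici_of_Ioi hu)
    obtain ⟨hmu, hκu⟩ := max_lt_iff.mp (Set.mem_Ioi.mp hu)
  · exact (hasDerivAt_liPiece κ m hu0.ne').differentiableAt.differentiableWithinAt
  rw [(hasDerivAt_liPiece κ m hu0.ne').deriv]
  have hfact : (m ! : ℝ) * u ≤ u ^ (m + 1) := by
    rw [pow_succ]
    exact mul_le_mul_of_nonneg_right (factorial_le_pow_of_le (by linarith)) hu0.le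
  have htail : 0 ≤ (κ * u - m) * (u - (m + 1)) + κ * u := by
    have : (m : ℝ) ≤ κ * u := by rw [div_lt_iff₀ hκ] at hκu; linarith
    nlinarith
  have := mul_nonneg (m !).cast_nonneg htail
  positivity

section Glue

variable {κ : ℝ}

theorem max_floor_add_one_floor_div_le (hκ0 : 0 < κ) (hκ : κ ≤ 1 / 2) {u : ℝ} (hu : 1 ≤ u) :
    max ((⌊κ * u⌋₊ : ℝ) + 1) (⌊κ * u⌋₊ / κ) ≤ u := by
  have hfloor : (⌊κ * u⌋₊ : ℝ) ≤ κ * u := Nat.floor_le (by positivity)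
  refine max_le ?_ ((div_le_iff₀ hκ0).mpr (by linarith))
  rcases Nat.eq_zero_or_pos ⌊κ * u⌋₊ with h | h
  · simpa [h] using hu
  · have : (1 : ℝ) ≤ ⌊κ * u⌋₊ := by exact_mod_cast h
    nlinarith

/-- The pieces match at the junctions `κ u ∈ ℕ`, so monotonicity propagates across them. -/
theorem liPiece_floor_monotoneOn (hκ0 : 0 < κ) (hκ : κ ≤ 1 / 2) :
    MonotoneOn (fun u => liPiece κ ⌊κ * u⌋₊ u) (Set.Ici 1) := by
  intro u hu v _ huv
  obtain ⟨d, hd⟩ : ∃ d, ⌊κ * v⌋₊ = ⌊κ * u⌋₊ + d :=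
    Nat.exists_eq_add_of_le (Nat.floor_le_floor (by gcongr))
  induction d generalizing u with
  | zero =>
    have hreg := max_floor_add_one_floor_div_le hκ0 hκ hu
    simp only [hd, add_zero]
    exact liPiece_monotoneOn hκ0 _ hreg (hreg.trans huv) huv
  | succ d ih =>
    set m := ⌊κ * u⌋₊
    set w := ((m : ℝ) + 1) / κ
    have hκw : κ * w = m + 1 := mul_div_cancel₀ _ hκ0.ne'
    have hfloor_w : ⌊κ * w⌋₊ = m + 1 := by rw [hκw]; exact_mod_cast Nat.floor_natCast (m + 1)
    have huw : u ≤ w := (le_div_iff₀ hκ0).mpr (by linarith [Nat.lt_floor_add_one (κ * u)])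
    have hwv : w ≤ v := by
      have hv : ((m + 1 : ℕ) : ℝ) ≤ κ * v :=
        (Nat.le_floor_iff (by nlinarith [hu.out])).mp (by omega)
      exact (div_le_iff₀ hκ0).mpr (by push_cast at hv; linarith)
    have hreg := max_floor_add_one_floor_div_le hκ0 hκ hu
    calc liPiece κ m u ≤ liPiece κ m w :=
          liPiece_monotoneOn hκ0 m hreg (hreg.trans huw) huw
      _ = liPiece κ ⌊κ * w⌋₊ w := by rw [hfloor_w, liPiece_succ_of_mul_eq hκw]
      _ ≤ liPiece κ ⌊κ * v⌋₊ v :=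
          ih (Set.mem_Ici.mpr (hu.out.trans huw)) hwv (by rw [hfloor_w]; omega)

end Glue

theorem liUnder_monotoneOn {κ : ℝ} (hκ0 : 0 < κ) (hκ : κ ≤ 1 / 2) :
    MonotoneOn (liUnder κ) (Set.Ici (exp 1)) := by
  intro x hx y hy hxy
  have hx0 : 0 < x := (exp_pos 1).trans_le hx
  have hlogx : 1 ≤ log x := (le_log_iff_exp_le hx0).mpr hx
  have hlogy : 1 ≤ log y := (le_log_iff_exp_le (hx0.trans_le hxy)).mpr hy
  rw [liUnder_eq_liPiece κ hx0 (by linarith),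
    liUnder_eq_liPiece κ (hx0.trans_le hxy) (by linarith)]
  exact liPiece_floor_monotoneOn hκ0 hκ hlogx hlogy (log_le_log hx0 hxy)

theorem liUnder_le_primeCounting_of_seq_general (κ : ℝ) (hκ0 : 0 < κ) (hκ1 : κ < 1)
    (hsol : κ * (1 - Real.log κ) = 1 / 2)
    (X : ℝ) (I : ℕ) (seq : ℕ → ℕ) (hseq0 : seq 0 = 2)
    (hstep : ∀ i ≤ I,
      IsGreatest {n : ℕ | seq i < n ∧
          liApprox κ (κ * Real.log n - ⌊κ * Real.log n⌋₊) n ≤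
            (Nat.primeCounting (seq i) : ℝ)}
        (seq (i + 1)))
    (hXle : X ≤ (seq (I + 1) : ℝ)) :
    ∀ x : ℝ, Real.exp 1 ≤ x → x ≤ X →
      liApprox κ (κ * Real.log x - ⌊κ * Real.log x⌋₊) x ≤ (Nat.primeCounting ⌊x⌋₊ : ℝ) := by
  intro x hex hxX
  have hκ : κ ≤ 1 / 2 := hsol ▸ self_le_mul_one_sub_log hκ0.le hκ1.le
  have hseq0x : (seq 0 : ℝ) ≤ x := by
    rw [hseq0, Nat.cast_ofNat]
    linarith [exp_one_gt_d9]
  obtain ⟨i, hiI, hix, hxi⟩ :=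
    exists_le_and_le_succ (s := fun n => (seq n : ℝ)) hseq0x (hxX.trans hXle)
  calc liUnder κ x ≤ liUnder κ (seq (i + 1)) :=
        liUnder_monotoneOn hκ0 hκ hex (hex.trans hxi) hxi
    _ ≤ Nat.primeCounting (seq i) := (hstep i hiI).1.2
    _ ≤ Nat.primeCounting ⌊x⌋₊ := by
        exact_mod_cast Nat.monotone_primeCounting (Nat.le_floor hix)

/-- Let `X ≥ e`. Suppose there are `I : ℕ` and naturals
`x₀, …, x_{I+1}` with `x₀ = 2` such that for each `i ≤ I`, `x_{i+1}` is the largest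
natural `n > x_i` with `li̲(n) ≤ π(x_i)`, and `X ≤ x_{I+1}`. Then `li̲(x) ≤ π(x)` for
all real `x` with `e ≤ x ≤ X`. Here `κ̲ ∈ (0,1)` solves `κ(1−log κ) = 1/2` and
`li̲(x) = li_{κ̲,α̲}(x)` with `α̲ = κ̲·log x − ⌊κ̲·log x⌋`. -/
theorem liUnder_le_primeCounting_of_seq (κ : ℝ) (hκ0 : 0 < κ) (hκ1 : κ < 1)
    (hsol : κ * (1 - Real.log κ) = 1 / 2)
    (X : ℝ) (hX : Real.exp 1 ≤ X) (I : ℕ) (seq : ℕ → ℕ) (hseq0 : seq 0 = 2)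
    (hstep : ∀ i ≤ I,
      IsGreatest {n : ℕ | seq i < n ∧
          liApprox κ (κ * Real.log n - ⌊κ * Real.log n⌋₊) n ≤
            (Nat.primeCounting (seq i) : ℝ)}
        (seq (i + 1)))
    (hXle : X ≤ (seq (I + 1) : ℝ)) :
    ∀ x : ℝ, Real.exp 1 ≤ x → x ≤ X →
      liApprox κ (κ * Real.log x - ⌊κ * Real.log x⌋₊) x ≤ (Nat.primeCounting ⌊x⌋₊ : ℝ) :=
  liUnder_le_primeCounting_of_seq_general κ hκ0 hκ1 hsol X I seq hseq0 hstep hXle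
end

section
/- Assume that π(x) < li(x) for all real x with 2 < x ≤ 1.39·10^17, and that |li(x) − li_*(x)| ≤ 1.265692883423 for all real x ≥ e. Then π(x) ≤ li̅(x) ≤ li_1(x) for all real x with e ≤ x ≤ 1.39·10^17. -/
/-- The logarithmic integral `li(x)`, the Cauchy principal value of `∫₀ˣ dt/log t`. -/
noncomputable def li (x : ℝ) : ℝ :=
  Filter.limUnder (nhdsWithin (0 : ℝ) (Set.Ioi 0)) fun ε =>
    (∫ t in (0 : ℝ)..(1 - ε), 1 / Real.log t) + ∫ t in (1 + ε)..x, 1 / Real.log t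

/-! With `L = log x`, `n = ⌊L⌋` and `m = ⌊κ L⌋`, the terms `k!/L^k` are nondecreasing for
`k ≥ n`, so comparing `li̅(x)` with `li_*(x)` term by term gives
`li̅(x) - li_*(x) ≥ (κ - 1)·x·n!/L^n`. Stirling's lower bound for `n!` gives
`L^n/n! ≤ e^(L-1)`, i.e. `x·n!/L^n ≥ e`, and `κ ≥ 3/2`, so the gap is at least
`e/2 > 1.2657`; it absorbs the error term in `π(x) < li(x) ≤ li_*(x) + 1.2657`. -/

open Real Finset
open scoped Nat

theorem exp_one_mul_pow_le_factorial_mul_exp {n : ℕ} (hn : n ≠ 0) :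
    exp 1 * n ^ n ≤ n ! * exp n := by
  obtain rfl | hn2 : n = 1 ∨ 2 ≤ n := by omega
  · simp
  have hsqrt : exp 1 ≤ √(2 * π * n) := by
    rw [le_sqrt (by positivity) (by positivity)]
    have hn2' : (2 : ℝ) ≤ n := by exact_mod_cast hn2
    calc exp 1 ^ 2 ≤ 3 ^ 2 := by gcongr; exact exp_one_lt_three.le
      _ ≤ 2 * π * n := by nlinarith [pi_gt_three]
  calc exp 1 * n ^ n ≤ √(2 * π * n) * (n / exp 1) ^ n * exp n := by
        rw [div_pow, ← exp_nat_mul, mul_one, mul_assoc, div_mul_cancel₀ _ (by positivity)]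
        gcongr
    _ ≤ n ! * exp n := by gcongr; exact Stirling.le_factorial_stirling n

theorem pow_div_factorial_le_exp_sub_one {n : ℕ} (hn : n ≠ 0) {L : ℝ} (hL : 0 ≤ L) :
    L ^ n / n ! ≤ exp (L - 1) := by
  have hratio : L / n ≤ exp (L / n - 1) := by linarith [add_one_le_exp (L / n - 1)]
  have hpow : L ^ n ≤ n ^ n * exp (L - n) := by
    calc L ^ n = n ^ n * (L / n) ^ n := by rw [div_pow, mul_div_cancel₀ _ (by positivity)]
      _ ≤ n ^ n * exp (L / n - 1) ^ n := by gcongr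
      _ = n ^ n * exp (L - n) := by
        rw [← exp_nat_mul]; congr 2; field_simp
  rw [div_le_iff₀ (by positivity)]
  calc L ^ n ≤ n ^ n * exp (L - n) := hpow
    _ = exp 1 * n ^ n * exp (L - 1 - n) := by
        rw [mul_assoc, mul_left_comm, ← exp_add]; ring_nf
    _ ≤ n ! * exp n * exp (L - 1 - n) :=
        mul_le_mul_of_nonneg_right (exp_one_mul_pow_le_factorial_mul_exp hn) (exp_pos _).le
    _ = exp (L - 1) * n ! := by rw [mul_assoc, ← exp_add]; ring_nf

theorem factorial_div_pow_le_factorial_div_pow {L : ℝ} (hL : 0 < L) {n k : ℕ} (hLn : L ≤ n + 1)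
    (hnk : n ≤ k) :
    (n ! : ℝ) / L ^ n ≤ k ! / L ^ k := by
  induction k, hnk using Nat.le_induction with
  | base => rfl
  | succ j hnj ih =>
    refine ih.trans ?_
    have hLj : L ≤ j + 1 := hLn.trans (by gcongr)
    rw [Nat.factorial_succ, Nat.cast_mul, pow_succ, ← div_div, mul_div_assoc, mul_comm,
      le_div_iff₀ hL]
    push_cast
    gcongr

theorem liApprox_le_liApprox_of_le {α β : ℝ} (κ : ℝ) (hαβ : α ≤ β) {x : ℝ} (hx : 1 ≤ x) :
    liApprox κ α x ≤ liApprox κ β x := by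
  have hL : 0 ≤ log x := log_nonneg hx
  unfold liApprox
  gcongr

theorem liStar_eq (x : ℝ) :
    liStar x = x / log x * (∑ k ∈ range ⌊log x⌋₊, (k ! : ℝ) / log x ^ k
      + (log x - ⌊log x⌋₊) * (⌊log x⌋₊ ! / log x ^ ⌊log x⌋₊)) := by
  rw [liStar, pow_succ]
  ring

theorem sub_one_mul_le_liApprox_sub_liStar {κ x : ℝ} (hκ : 1 ≤ κ) (hx : exp 1 ≤ x) :
    (κ - 1) * (x * (⌊log x⌋₊ ! / log x ^ ⌊log x⌋₊)) ≤
      liApprox κ (κ * log x - ⌊κ * log x⌋₊) x - liStar x := by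
  have hx0 : 0 < x := (exp_pos 1).trans_le hx
  set L := log x
  have hL : 1 ≤ L := by rwa [le_log_iff_exp_le hx0]
  set n := ⌊L⌋₊
  set m := ⌊κ * L⌋₊
  set f : ℕ → ℝ := fun k => k ! / L ^ k
  have hmκL : m ≤ κ * L := Nat.floor_le (by positivity)
  have hnm : n ≤ m := Nat.floor_mono (by nlinarith)
  have hf : ∀ k, n ≤ k → f n ≤ f k := fun k =>
    factorial_div_pow_le_factorial_div_pow (by positivity) (Nat.lt_floor_add_one L).le
  have hIco : ((m : ℝ) - n) * f n ≤ ∑ k ∈ Ico n m, f k := by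
    have := card_nsmul_le_sum (Ico n m) f (f n) fun k hk => hf k (mem_Ico.mp hk).1
    rwa [Nat.card_Ico, nsmul_eq_mul, Nat.cast_sub hnm] at this
  have hdiff : liApprox κ (κ * L - m) x - liStar x =
      x / L * ((κ * L - m) * f m + ∑ k ∈ Ico n m, f k - (L - n) * f n) := by
    rw [liStar_eq, liApprox, ← sum_range_add_sum_Ico _ hnm]
    simp only [f]
    ring
  rw [hdiff]
  calc (κ - 1) * (x * f n)
        = x / L * ((κ * L - m) * f n + (m - n) * f n - (L - n) * f n) := by
        field_simp
        ring
    _ ≤ _ := by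
      gcongr
      exact hf m hnm

theorem exp_one_le_mul_factorial_div_pow_floor_log {x : ℝ} (hx : exp 1 ≤ x) :
    exp 1 ≤ x * (⌊log x⌋₊ ! / log x ^ ⌊log x⌋₊) := by
  have hx0 : 0 < x := (exp_pos 1).trans_le hx
  have hL : 1 ≤ log x := by rwa [le_log_iff_exp_le hx0]
  have hn : ⌊log x⌋₊ ≠ 0 := (Nat.floor_pos.mpr hL).ne'
  have := pow_div_factorial_le_exp_sub_one hn (by positivity : 0 ≤ log x)
  rw [exp_sub, exp_log hx0, div_le_div_iff₀ (by positivity) (exp_pos 1)] at this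
  rw [mul_div_assoc', le_div_iff₀ (by positivity)]
  linarith

theorem three_halves_le_of_mul_one_sub_log_eq {κ : ℝ} (hκ : 1 < κ)
    (hsol : κ * (1 - log κ) = 1 / 2) : 3 / 2 ≤ κ := by
  by_contra! h
  nlinarith [log_le_sub_one_of_pos (by positivity : 0 < κ)]

theorem primeCounting_le_liOver_general (κ : ℝ) (hκ1 : 1 < κ)
    (hsol : κ * (1 - Real.log κ) = 1 / 2)
    (hlt : ∀ x : ℝ, 2 < x → x ≤ 1.39e17 → (Nat.primeCounting ⌊x⌋₊ : ℝ) < li x)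
    (herr : ∀ x : ℝ, Real.exp 1 ≤ x → |li x - liStar x| ≤ 1.265692883423)
    (x : ℝ) (hx : Real.exp 1 ≤ x) (hx' : x ≤ 1.39e17) :
    (Nat.primeCounting ⌊x⌋₊ : ℝ) ≤
        liApprox κ (κ * Real.log x - ⌊κ * Real.log x⌋₊) x ∧
      liApprox κ (κ * Real.log x - ⌊κ * Real.log x⌋₊) x ≤ liApprox κ 1 x := by
  have hκ : 3 / 2 ≤ κ := three_halves_le_of_mul_one_sub_log_eq hκ1 hsol
  have he : 2.7182818283 < exp 1 := exp_one_gt_d9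
  have hgap : liStar x + 1.265692883423 ≤ liApprox κ (κ * log x - ⌊κ * log x⌋₊) x := by
    have hdiff := sub_one_mul_le_liApprox_sub_liStar hκ1.le hx
    have hxA := exp_one_le_mul_factorial_div_pow_floor_log hx
    nlinarith
  constructor
  · have hπ := hlt x (by linarith) hx'
    have herr' := (abs_le.mp (herr x hx)).2
    linarith
  · apply liApprox_le_liApprox_of_le κ _ ((one_le_exp zero_le_one).trans hx)
    linarith [Nat.lt_floor_add_one (κ * log x)]

/-- Assume `π(x) < li(x)` for all real `2 < x ≤ 1.39·10^17` and
`|li(x) − li_*(x)| ≤ 1.265692883423` for all real `x ≥ e`. Then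
`π(x) ≤ li̅(x) ≤ li₁(x)` for all real `e ≤ x ≤ 1.39·10^17`, where `κ̄ ∈ (1,e)` solves
`κ(1−log κ) = 1/2`, `li̅(x) = li_{κ̄,ᾱ}(x)` with `ᾱ = κ̄·log x − ⌊κ̄·log x⌋`, and
`li₁(x) = li_{κ̄,1}(x)`. -/
theorem primeCounting_le_liOver (κ : ℝ) (hκ1 : 1 < κ) (hκe : κ < Real.exp 1)
    (hsol : κ * (1 - Real.log κ) = 1 / 2)
    (hlt : ∀ x : ℝ, 2 < x → x ≤ 1.39e17 → (Nat.primeCounting ⌊x⌋₊ : ℝ) < li x)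
    (herr : ∀ x : ℝ, Real.exp 1 ≤ x → |li x - liStar x| ≤ 1.265692883423)
    (x : ℝ) (hx : Real.exp 1 ≤ x) (hx' : x ≤ 1.39e17) :
    (Nat.primeCounting ⌊x⌋₊ : ℝ) ≤
        liApprox κ (κ * Real.log x - ⌊κ * Real.log x⌋₊) x ∧
      liApprox κ (κ * Real.log x - ⌊κ * Real.log x⌋₊) x ≤ liApprox κ 1 x :=
  primeCounting_le_liOver_general κ hκ1 hsol hlt herr x hx hx'
end

section
/- For every real number y ≥ 1 and every natural number m with m < n, where n = ⌊y⌋, one has Σ_{k=1}^{n−m} (1/y^k) · Π_{i=1}^{k} (m + i) ≤ 2·(y + m)/(y − m). -/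
private lemma aux_pow (A : ℝ) (hA : 0 ≤ A) : ∀ k : ℕ,
    A ^ k * (A + ((k : ℝ) + 1) / 2) ≤ (A + 1 / 2) ^ (k + 1) := by
  intro k
  induction k with
  | zero => norm_num
  | succ k ih =>
    have key : A ^ k * (A + ((k : ℝ) + 1) / 2) * (A + 1 / 2)
        - A ^ k * A * (A + (((k : ℝ) + 1) + 1) / 2) = A ^ k * (((k : ℝ) + 1) / 4) := by
      ring
    calc A ^ (k + 1) * (A + (((k + 1 : ℕ) : ℝ) + 1) / 2)
        ≤ (A ^ k * (A + ((k : ℝ) + 1) / 2)) * (A + 1 / 2) := by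
          rw [pow_succ]
          push_cast
          have hnn : 0 ≤ A ^ k * (((k : ℝ) + 1) / 4) :=
            mul_nonneg (pow_nonneg hA k) (by positivity)
          linarith [key]
      _ ≤ (A + 1 / 2) ^ (k + 1) * (A + 1 / 2) :=
          mul_le_mul_of_nonneg_right ih (by linarith)
      _ = (A + 1 / 2) ^ (k + 1 + 1) := (pow_succ _ _).symm

private lemma prod_le_amgm (c : ℝ) (hc : 0 ≤ c) (k : ℕ) :
    ∏ i ∈ Finset.Icc 1 k, (c + (i : ℝ)) ≤ (c + ((k : ℝ) + 1) / 2) ^ k := by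
  induction k with
  | zero => simp
  | succ k ih =>
    rw [Finset.prod_Icc_succ_top (Nat.succ_le_succ (Nat.zero_le k))]
    have h1 : (∏ i ∈ Finset.Icc 1 k, (c + (i : ℝ))) * (c + ((k + 1 : ℕ) : ℝ))
        ≤ (c + ((k : ℝ) + 1) / 2) ^ k * (c + ((k + 1 : ℕ) : ℝ)) := by
      apply mul_le_mul_of_nonneg_right ih
      push_cast; positivity
    have h2 := aux_pow (c + ((k : ℝ) + 1) / 2) (by positivity) k
    calc (∏ i ∈ Finset.Icc 1 k, (c + (i : ℝ))) * (c + ((k + 1 : ℕ) : ℝ))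
        ≤ (c + ((k : ℝ) + 1) / 2) ^ k * (c + ((k + 1 : ℕ) : ℝ)) := h1
      _ ≤ (c + (((k + 1 : ℕ) : ℝ) + 1) / 2) ^ (k + 1) := by
          push_cast at h2 ⊢
          have e1 : c + ((k : ℝ) + 1) / 2 + ((k : ℝ) + 1) / 2 = c + (k : ℝ) + 1 := by ring
          have e2 : c + ((k : ℝ) + 1) / 2 + 1 / 2 = c + ((k : ℝ) + 1 + 1) / 2 := by ring
          rw [e1, e2] at h2
          convert h2 using 2 <;> ring

/-- For every real `y ≥ 1` and every natural `m < n`, where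
`n = ⌊y⌋`, one has `Σ_{k=1}^{n−m} (1/y^k)·Π_{i=1}^{k} (m+i) ≤ 2·(y+m)/(y−m)`. -/
theorem sum_div_pow_mul_prod_le (y : ℝ) (hy : 1 ≤ y) (m : ℕ) (hm : m < ⌊y⌋₊) :
    ∑ k ∈ Finset.Icc 1 (⌊y⌋₊ - m),
        (1 / y ^ k) * ∏ i ∈ Finset.Icc 1 k, ((m : ℝ) + (i : ℝ)) ≤
      2 * (y + m) / (y - m) := by
  set n := ⌊y⌋₊ with hn
  have hy0 : (0:ℝ) < y := by linarith
  have hny : (n : ℝ) ≤ y := Nat.floor_le (le_of_lt hy0)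
  have hm1n : m + 1 ≤ n := hm
  have hm1y : (m : ℝ) + 1 ≤ y := by
    calc (m : ℝ) + 1 = ((m + 1 : ℕ) : ℝ) := by push_cast; ring
      _ ≤ (n : ℝ) := by exact_mod_cast hm1n
      _ ≤ y := hny
  have hym : (0:ℝ) < y - m := by linarith
  set r : ℝ := (y + m + 1) / (2 * y) with hr
  have hr0 : 0 ≤ r := by positivity
  have hr1 : r ≤ 1 := by
    rw [hr, div_le_one (by positivity)]; linarith
  -- termwise bound
  have hterm : ∀ k ∈ Finset.Icc 1 (n - m),
      (1 / y ^ k) * ∏ i ∈ Finset.Icc 1 k, ((m : ℝ) + (i : ℝ)) ≤ r ^ k := by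
    intro k hk
    obtain ⟨hk1, hk2⟩ := Finset.mem_Icc.mp hk
    have hmk : m + k ≤ n := by omega
    have hmkR : (m : ℝ) + k ≤ y := by
      calc (m : ℝ) + k = ((m + k : ℕ) : ℝ) := by push_cast; ring
        _ ≤ (n : ℝ) := by exact_mod_cast hmk
        _ ≤ y := hny
    have h1 : (1 / y ^ k) * ∏ i ∈ Finset.Icc 1 k, ((m : ℝ) + (i : ℝ))
        ≤ (1 / y ^ k) * ((m : ℝ) + ((k : ℝ) + 1) / 2) ^ k := by
      apply mul_le_mul_of_nonneg_left (prod_le_amgm (m : ℝ) (Nat.cast_nonneg m) k)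
      positivity
    have h2 : (1 / y ^ k) * ((m : ℝ) + ((k : ℝ) + 1) / 2) ^ k
        = (((m : ℝ) + ((k : ℝ) + 1) / 2) / y) ^ k := by
      rw [div_pow]; ring
    have h3 : ((m : ℝ) + ((k : ℝ) + 1) / 2) / y ≤ r := by
      rw [hr, div_le_div_iff₀ hy0 (by positivity)]
      nlinarith [mul_le_mul_of_nonneg_left hmkR (le_of_lt hy0)]
    calc (1 / y ^ k) * ∏ i ∈ Finset.Icc 1 k, ((m : ℝ) + (i : ℝ))
        ≤ (((m : ℝ) + ((k : ℝ) + 1) / 2) / y) ^ k := by rw [← h2]; exact h1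
      _ ≤ r ^ k := pow_le_pow_left₀ (by positivity) h3 k
  have hsum1 : ∑ k ∈ Finset.Icc 1 (n - m),
      (1 / y ^ k) * ∏ i ∈ Finset.Icc 1 k, ((m : ℝ) + (i : ℝ))
      ≤ ∑ k ∈ Finset.Icc 1 (n - m), r ^ k := Finset.sum_le_sum hterm
  rcases le_or_gt (n - m) 2 with hN | hN
  · -- few terms: each term ≤ 1
    have h2' : ∑ k ∈ Finset.Icc 1 (n - m), r ^ k ≤ ((n - m : ℕ) : ℝ) := by
      calc ∑ k ∈ Finset.Icc 1 (n - m), r ^ k ≤ ∑ _k ∈ Finset.Icc 1 (n - m), (1:ℝ) :=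
            Finset.sum_le_sum (fun k _ => pow_le_one₀ hr0 hr1)
        _ = ((n - m : ℕ) : ℝ) := by
            rw [Finset.sum_const, Nat.card_Icc]; simp
    have hNR : ((n - m : ℕ) : ℝ) ≤ 2 := by exact_mod_cast hN
    have hfin : (2:ℝ) ≤ 2 * (y + m) / (y - m) := by
      rw [le_div_iff₀ hym]
      linarith [(Nat.cast_nonneg m : (0:ℝ) ≤ (m:ℝ))]
    linarith
  · -- geometric bound
    have hm3n : m + 3 ≤ n := by omega
    have hm3 : (m : ℝ) + 3 ≤ y := by
      calc (m : ℝ) + 3 = ((m + 3 : ℕ) : ℝ) := by push_cast; ring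
        _ ≤ (n : ℝ) := by exact_mod_cast hm3n
        _ ≤ y := hny
    have hrlt : r < 1 := by
      rw [hr, div_lt_one (by positivity)]; linarith
    have h1r : (0:ℝ) < 1 - r := by linarith
    have hgeom : ∑ k ∈ Finset.Icc 1 (n - m), r ^ k ≤ r / (1 - r) := by
      have hsum_le : ∑ j ∈ Finset.range (n - m), r ^ j ≤ 1 / (1 - r) := by
        rw [le_div_iff₀ h1r]
        have hgs := geom_sum_mul r (n - m)
        nlinarith [pow_nonneg hr0 (n - m)]
      calc ∑ k ∈ Finset.Icc 1 (n - m), r ^ k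
          = ∑ j ∈ Finset.range (n - m + 1 - 1), r ^ (1 + j) := by
            rw [← Finset.Ico_add_one_right_eq_Icc, Finset.sum_Ico_eq_sum_range]
        _ = r * ∑ j ∈ Finset.range (n - m), r ^ j := by
            simp only [Nat.add_sub_cancel]
            rw [Finset.mul_sum]
            exact Finset.sum_congr rfl (fun j _ => by rw [pow_add, pow_one])
        _ ≤ r * (1 / (1 - r)) := mul_le_mul_of_nonneg_left hsum_le hr0
        _ = r / (1 - r) := by ring
    have hm0 : (0:ℝ) ≤ (m:ℝ) := Nat.cast_nonneg m
    have hd : (0:ℝ) < y - m - 1 := by linarith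
    have h2y : (2 * y) ≠ 0 := by positivity
    have hd' : y - (m:ℝ) - 1 ≠ 0 := ne_of_gt hd
    have h1re : 1 - r = (y - (m:ℝ) - 1) / (2 * y) := by
      rw [hr, eq_div_iff h2y, sub_mul, div_mul_cancel₀ _ h2y]
      ring
    have hre : r / (1 - r) = (y + m + 1) / (y - m - 1) := by
      rw [div_eq_div_iff (ne_of_gt h1r) hd', hr, h1re]
      ring
    have hfin : r / (1 - r) ≤ 2 * (y + m) / (y - m) := by
      rw [hre, div_le_div_iff₀ hd hym]
      nlinarith [mul_le_mul_of_nonneg_right (show (3:ℝ) ≤ y - m by linarith)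
          (show (0:ℝ) ≤ y + m by linarith)]
    linarith
end
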